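/- arXiv:2511.04164 — 5 statements merged into one kernel-verified Lean document; each statement's English description precedes it below -/
import Mathlib

section
/- Let ℓ=1, Q₁=[0,1]×[0,1], k>1, Q₂=[0,k]×[0,1], and f*(x+iy)=kx+iy the linear stretch from Q₁ onto Q₂. For 0<ε<(k−1)², define f_ε(x+iy)=g_ε(x)+iy where g_ε(x)=(k+√ε)x for x∈[0,1/2] and g_ε(x)=(k−√ε)x+√ε for x∈[1/2,1]. Then f_ε∈𝓕, f_ε≠f_{ε'} for ε≠ε', K(z,f_ε)=k+√ε for z=x+iy with x∈(0,1/2) and K(z,f_ε)=k−√ε for x∈(1/2,1), and ∫_{Q₁} K(z,f_ε) dL² = ∫_{Q₁} K(z,f*) dL² = k. Hence for φ(t)=t the mean distortion functional has infinitely many minimizers in 𝓕. -/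
open MeasureTheory Set

/-- The Wirtinger derivative `f_z = (f_x - i f_y)/2` (computed via the real Fréchet
derivative; junk value if `f` is not differentiable at `z`). -/
noncomputable def wz (f : ℂ → ℂ) (z : ℂ) : ℂ :=
  (fderiv ℝ f z 1 - Complex.I * fderiv ℝ f z Complex.I) / 2

/-- The Wirtinger derivative `f_z̄ = (f_x + i f_y)/2`. -/
noncomputable def wzbar (f : ℂ → ℂ) (z : ℂ) : ℂ :=
  (fderiv ℝ f z 1 + Complex.I * fderiv ℝ f z Complex.I) / 2

/-- The linear distortion `K(z,f)`. -/
noncomputable def distK (f : ℂ → ℂ) (z : ℂ) : ℝ :=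
  if ‖wzbar f z‖ < ‖wz f z‖ then
    (‖wz f z‖ + ‖wzbar f z‖) /
      (‖wz f z‖ - ‖wzbar f z‖)
  else 1

/-- The Jacobian determinant `J(z,f) = |f_z|² - |f_z̄|²`. -/
noncomputable def jacF (f : ℂ → ℂ) (z : ℂ) : ℝ :=
  ‖wz f z‖ ^ 2 - ‖wzbar f z‖ ^ 2

/-- `f` is an orientation-preserving homeomorphism of finite distortion from `A` onto `B`,
in the Sobolev class `W^{1,2}(A,B)`. -/
def FDHomeoOn (f : ℂ → ℂ) (A B : Set ℂ) : Prop :=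
  ContinuousOn f A ∧ Set.InjOn f A ∧ f '' A = B ∧
  (∀ᵐ z ∂(volume.restrict A), DifferentiableAt ℝ f z) ∧
  MemLp (fun z => ‖fderiv ℝ f z‖) 2 (volume.restrict A) ∧
  ∃ K : ℂ → ℝ, Measurable K ∧ (∀ z, 1 ≤ K z) ∧
    ∀ᵐ z ∂(volume.restrict A),
      0 ≤ jacF f z ∧
      (‖wz f z‖ + ‖wzbar f z‖) ^ 2 ≤ K z * jacF f z

/-- The annulus `{w : a ≤ |w| ≤ 1}`. -/
def annulus (a : ℝ) : Set ℂ := {w : ℂ | a ≤ ‖w‖ ∧ ‖w‖ ≤ 1}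

/-- The spiral-stretch map `g*(w) = w |w|^{k-1} exp(i θ log|w| / log q)`. -/
noncomputable def spiralStretch (q k θ : ℝ) (w : ℂ) : ℂ :=
  w * ((‖w‖ ^ (k - 1) : ℝ) : ℂ) *
    Complex.exp (Complex.I * ((θ * Real.log (‖w‖) / Real.log q : ℝ) : ℂ))

/-- The rectangle `Q₁ = [0,ℓ] × [0,1] ⊆ ℂ`. -/
def Qone (ℓ : ℝ) : Set ℂ := {z : ℂ | z.re ∈ Set.Icc 0 ℓ ∧ z.im ∈ Set.Icc 0 1}

/-- The linear stretch `f*(x+iy) = kx + inx + iy`. -/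
noncomputable def fStar (k n : ℝ) (z : ℂ) : ℂ := ⟨k * z.re, n * z.re + z.im⟩

/-- The inverse of the linear stretch `f*`. -/
noncomputable def fStarInv (k n : ℝ) (w : ℂ) : ℂ := ⟨w.re / k, w.im - n * w.re / k⟩

/-- The lattice `L = ℤ i + ℤ (kℓ + inℓ)`. -/
noncomputable def latticeL (k ℓ n : ℝ) : AddSubgroup ℂ :=
  AddSubgroup.closure {Complex.I, (⟨k * ℓ, n * ℓ⟩ : ℂ)}

/-- `S` is a fundamental domain for the lattice `L = ℤ i + ℤ (kℓ + inℓ)`: its translates by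
lattice vectors cover `ℂ` and have pairwise disjoint interiors. -/
def IsFundDom (k ℓ n : ℝ) (S : Set ℂ) : Prop :=
  (⋃ v ∈ latticeL k ℓ n, (fun z => z + v) '' S) = Set.univ ∧
  ∀ v ∈ latticeL k ℓ n, v ≠ 0 → interior S ∩ ((fun z => z + v) '' interior S) = ∅

/-- The class `𝓕` of orientation-preserving homeomorphisms `f ∈ W^{1,2}(Q₁)` of finite
distortion satisfying the boundary conditions `f(0)=0`, `f(x+i)=f(x)+i`,
`f(ℓ+iy)=f(iy)+kℓ+inℓ`, and such that `f(Q₁)` is a fundamental domain for `L`. -/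
def memF (k ℓ n : ℝ) (f : ℂ → ℂ) : Prop :=
  FDHomeoOn f (Qone ℓ) (f '' Qone ℓ) ∧
  f 0 = 0 ∧
  (∀ x ∈ Set.Icc (0 : ℝ) ℓ, f (x + Complex.I) = f x + Complex.I) ∧
  (∀ y ∈ Set.Icc (0 : ℝ) 1, f (ℓ + y * Complex.I) = f (y * Complex.I) + ⟨k * ℓ, n * ℓ⟩) ∧
  IsFundDom k ℓ n (f '' Qone ℓ)

/-- The piecewise-linear stretch `g_ε` on `[0,1]`. -/
noncomputable def gPL (k ε : ℝ) (x : ℝ) : ℝ :=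
  if x ≤ 1 / 2 then (k + Real.sqrt ε) * x else (k - Real.sqrt ε) * x + Real.sqrt ε

/-- The piecewise-linear map `f_ε(x+iy) = g_ε(x) + iy`. -/
noncomputable def fPL (k ε : ℝ) (z : ℂ) : ℂ := ⟨gPL k ε z.re, z.im⟩

/-- the real-linear map `w ↦ ((a+1)/2) w + ((a-1)/2) conj w`, i.e. `x+iy ↦ ax+iy`. -/
noncomputable def La (a : ℝ) : ℂ →L[ℝ] ℂ :=
  (((a+1)/2 : ℂ)) • (ContinuousLinearMap.id ℝ ℂ) +
  (((a-1)/2 : ℂ)) • (Complex.conjCLE : ℂ ≃L[ℝ] ℂ).toContinuousLinearMap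

lemma La_apply (a : ℝ) (w : ℂ) :
    La a w = ((a+1)/2 : ℂ) * w + ((a-1)/2 : ℂ) * (starRingEnd ℂ) w := by
  simp [La, smul_eq_mul]

lemma hasFDerivAt_La (a : ℝ) (c : ℂ) (z : ℂ) :
    HasFDerivAt (fun w => ((a+1)/2 : ℂ) * w + ((a-1)/2 : ℂ) * (starRingEnd ℂ) w + c)
      (La a) z := by
  have h1 : HasFDerivAt (fun w : ℂ => ((a+1)/2 : ℂ) * w)
      ((((a+1)/2 : ℂ)) • (ContinuousLinearMap.id ℝ ℂ)) z :=
    (hasFDerivAt_id z).const_mul _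
  have h2 : HasFDerivAt (fun w : ℂ => ((a-1)/2 : ℂ) * (starRingEnd ℂ) w)
      ((((a-1)/2 : ℂ)) • (Complex.conjCLE : ℂ ≃L[ℝ] ℂ).toContinuousLinearMap) z := by
    have := (Complex.conjCLE : ℂ ≃L[ℝ] ℂ).toContinuousLinearMap.hasFDerivAt (x := z)
    exact this.const_mul _
  exact ((h1.add h2).add_const c)

lemma La_one (a : ℝ) : La a 1 = (a : ℂ) := by
  rw [La_apply]; simp; ring

lemma La_I (a : ℝ) : La a Complex.I = Complex.I := by
  rw [La_apply]; simp; ring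

lemma wz_wzbar_of_fderiv {f : ℂ → ℂ} {a : ℝ} {z : ℂ} (h : fderiv ℝ f z = La a) :
    wz f z = ((a+1)/2 : ℝ) ∧ wzbar f z = ((a-1)/2 : ℝ) := by
  constructor
  · rw [wz, h, La_one, La_I]
    simp only [Complex.ext_iff, Complex.div_re, Complex.div_im, Complex.sub_re,
      Complex.sub_im, Complex.mul_re, Complex.mul_im, Complex.I_re, Complex.I_im,
      Complex.ofReal_re, Complex.ofReal_im, Complex.normSq_ofNat]
    norm_num
    ring
  · rw [wzbar, h, La_one, La_I]
    simp only [Complex.ext_iff, Complex.div_re, Complex.div_im, Complex.add_re,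
      Complex.add_im, Complex.mul_re, Complex.mul_im, Complex.I_re, Complex.I_im,
      Complex.ofReal_re, Complex.ofReal_im, Complex.normSq_ofNat]
    norm_num
    ring

lemma distK_of_fderiv {f : ℂ → ℂ} {a : ℝ} {z : ℂ} (ha : 1 < a) (h : fderiv ℝ f z = La a) :
    distK f z = a ∧ jacF f z = a ∧
    ‖wz f z‖ = (a+1)/2 ∧ ‖wzbar f z‖ = (a-1)/2 := by
  obtain ⟨h1, h2⟩ := wz_wzbar_of_fderiv h
  have e1 : ‖wz f z‖ = (a+1)/2 := by
    rw [h1, Complex.norm_real, Real.norm_of_nonneg (by linarith)]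
  have e2 : ‖wzbar f z‖ = (a-1)/2 := by
    rw [h2, Complex.norm_real, Real.norm_of_nonneg (by linarith)]
  refine ⟨?_, ?_, e1, e2⟩
  · rw [distK, if_pos (by rw [e1, e2]; linarith)]
    rw [e1, e2]
    field_simp; ring
  · rw [jacF, e1, e2]; ring

lemma La_opNorm_le (a : ℝ) (ha : 1 ≤ a) : ‖La a‖ ≤ a := by
  refine ContinuousLinearMap.opNorm_le_bound _ (by linarith) fun w => ?_
  rw [La_apply]
  calc ‖((a+1)/2 : ℂ) * w + ((a-1)/2 : ℂ) * (starRingEnd ℂ) w‖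
      ≤ ‖((a+1)/2 : ℂ) * w‖ + ‖((a-1)/2 : ℂ) * (starRingEnd ℂ) w‖ := norm_add_le _ _
    _ = (a+1)/2 * ‖w‖ + (a-1)/2 * ‖w‖ := by
        have e1 : ((a:ℂ)+1)/2 = ((((a+1)/2):ℝ):ℂ) := by push_cast; ring
        have e2 : ((a:ℂ)-1)/2 = ((((a-1)/2):ℝ):ℂ) := by push_cast; ring
        rw [norm_mul, norm_mul, e1, e2, Complex.norm_conj, Complex.norm_real,
          Complex.norm_real, Real.norm_of_nonneg (by linarith : (0:ℝ) ≤ (a+1)/2),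
          Real.norm_of_nonneg (by linarith : (0:ℝ) ≤ (a-1)/2)]
    _ = a * ‖w‖ := by ring

section ke
variable {k ε : ℝ} (hk : 1 < k) (hε : ε ∈ Set.Ioo (0 : ℝ) ((k - 1) ^ 2))

lemma sqrt_lt (hk : 1 < k) (hε : ε ∈ Set.Ioo (0 : ℝ) ((k - 1) ^ 2)) :
    0 < Real.sqrt ε ∧ Real.sqrt ε < k - 1 := by
  constructor
  · exact Real.sqrt_pos.2 hε.1
  · have := Real.sqrt_lt_sqrt hε.1.le hε.2
    rwa [Real.sqrt_sq (by linarith)] at this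

lemma gPL_eq_min (hε0 : 0 ≤ ε) (x : ℝ) :
    gPL k ε x = min ((k + Real.sqrt ε) * x) ((k - Real.sqrt ε) * x + Real.sqrt ε) := by
  have hs : 0 ≤ Real.sqrt ε := Real.sqrt_nonneg ε
  rw [gPL]
  rcases le_or_gt x (1/2) with h | h
  · rw [if_pos h, eq_comm, min_eq_left]; nlinarith
  · rw [if_neg (not_le.2 h), eq_comm, min_eq_right]; nlinarith

lemma gPL_strictMono (hk : 1 < k) (hε : ε ∈ Set.Ioo (0 : ℝ) ((k - 1) ^ 2)) :
    StrictMono (gPL k ε) := by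
  obtain ⟨hs0, hs1⟩ := sqrt_lt hk hε
  intro x y hxy
  rw [gPL_eq_min hε.1.le, gPL_eq_min hε.1.le]
  have h1 : (k + Real.sqrt ε) * x < (k + Real.sqrt ε) * y := by nlinarith
  have h2 : (k - Real.sqrt ε) * x + Real.sqrt ε < (k - Real.sqrt ε) * y + Real.sqrt ε := by
    nlinarith
  exact lt_min ((min_le_left _ _).trans_lt h1) ((min_le_right _ _).trans_lt h2)

lemma gPL_continuous (hε0 : 0 ≤ ε) : Continuous (gPL k ε) := by
  have : gPL k ε = fun x => min ((k + Real.sqrt ε) * x) ((k - Real.sqrt ε) * x + Real.sqrt ε) :=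
    funext (gPL_eq_min hε0)
  rw [this]
  fun_prop

lemma fPL_eq (z : ℂ) : fPL k ε z = ((gPL k ε z.re : ℝ) : ℂ) + z.im * Complex.I := by
  apply Complex.ext <;> simp [fPL]

lemma fPL_continuous (hε0 : 0 ≤ ε) : Continuous (fPL k ε) := by
  have : fPL k ε = fun z => ((gPL k ε z.re : ℝ) : ℂ) + z.im * Complex.I :=
    funext fPL_eq
  rw [this]
  have := gPL_continuous (k := k) hε0
  fun_prop

lemma fPL_injective (hk : 1 < k) (hε : ε ∈ Set.Ioo (0 : ℝ) ((k - 1) ^ 2)) :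
    Function.Injective (fPL k ε) := by
  intro z w h
  have h1 : gPL k ε z.re = gPL k ε w.re := congrArg Complex.re h
  have h2 : z.im = w.im := by
    have := congrArg Complex.im h
    simpa [fPL] using this
  exact Complex.ext ((gPL_strictMono hk hε).injective h1) h2

lemma gPL_zero : gPL k ε 0 = 0 := by simp [gPL]

lemma gPL_one (hε0 : 0 ≤ ε) : gPL k ε 1 = k := by
  rw [gPL, if_neg (by norm_num)]; ring

-- the affine model map
lemma affine_apply (a s : ℝ) (w : ℂ) :
    (((a:ℂ)+1)/2) * w + (((a:ℂ)-1)/2) * (starRingEnd ℂ) w + (s:ℂ) =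
      Complex.mk (a * w.re + s) w.im := by
  have e1 : ((a:ℂ)+1)/2 = ((((a+1)/2):ℝ):ℂ) := by push_cast; ring
  have e2 : ((a:ℂ)-1)/2 = ((((a-1)/2):ℝ):ℂ) := by push_cast; ring
  rw [e1, e2]
  apply Complex.ext <;>
    simp [Complex.add_re, Complex.add_im, Complex.mul_re, Complex.mul_im] <;> ring

-- f agrees with affine maps on half planes
lemma fPL_eq_left {z : ℂ} (hz : z.re ≤ 1/2) :
    fPL k ε z = (((k + Real.sqrt ε : ℝ):ℂ)+1)/2 * z +
      (((k + Real.sqrt ε : ℝ):ℂ)-1)/2 * (starRingEnd ℂ) z + ((0:ℝ):ℂ) := by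
  rw [affine_apply]
  apply Complex.ext
  · show gPL k ε z.re = _
    rw [gPL, if_pos hz]; simp
  · simp [fPL]

lemma fPL_eq_right (hε0 : 0 ≤ ε) {z : ℂ} (hz : (1:ℝ)/2 ≤ z.re) :
    fPL k ε z = (((k - Real.sqrt ε : ℝ):ℂ)+1)/2 * z +
      (((k - Real.sqrt ε : ℝ):ℂ)-1)/2 * (starRingEnd ℂ) z + ((Real.sqrt ε:ℝ):ℂ) := by
  rw [affine_apply]
  apply Complex.ext
  · show gPL k ε z.re = _
    rw [gPL]
    rcases le_or_gt z.re (1/2) with h | h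
    · rw [if_pos h]
      have : z.re = 1/2 := le_antisymm h hz
      rw [this]; ring
    · rw [if_neg (not_le.2 h)]
  · simp [fPL]

end ke

section ke2
variable {k ε : ℝ}

lemma isOpen_lt_half : IsOpen {z : ℂ | z.re < 1/2} :=
  isOpen_lt Complex.continuous_re continuous_const

lemma isOpen_gt_half : IsOpen {z : ℂ | (1:ℝ)/2 < z.re} :=
  isOpen_lt continuous_const Complex.continuous_re

lemma fderiv_fPL_left {z : ℂ} (hz : z.re < 1/2) :
    fderiv ℝ (fPL k ε) z = La (k + Real.sqrt ε) := by
  have heq : fPL k ε =ᶠ[nhds z] (fun w => (((k + Real.sqrt ε : ℝ):ℂ)+1)/2 * w +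
      (((k + Real.sqrt ε : ℝ):ℂ)-1)/2 * (starRingEnd ℂ) w + ((0:ℝ):ℂ)) := by
    filter_upwards [isOpen_lt_half.mem_nhds hz] with w hw
    exact fPL_eq_left hw.le
  exact ((hasFDerivAt_La (k + Real.sqrt ε) ((0:ℝ):ℂ) z).congr_of_eventuallyEq heq).fderiv

lemma fderiv_fPL_right (hε0 : 0 ≤ ε) {z : ℂ} (hz : (1:ℝ)/2 < z.re) :
    fderiv ℝ (fPL k ε) z = La (k - Real.sqrt ε) := by
  have heq : fPL k ε =ᶠ[nhds z] (fun w => (((k - Real.sqrt ε : ℝ):ℂ)+1)/2 * w +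
      (((k - Real.sqrt ε : ℝ):ℂ)-1)/2 * (starRingEnd ℂ) w + ((Real.sqrt ε:ℝ):ℂ)) := by
    filter_upwards [isOpen_gt_half.mem_nhds hz] with w hw
    exact fPL_eq_right hε0 hw.le
  exact ((hasFDerivAt_La (k - Real.sqrt ε) ((Real.sqrt ε:ℝ):ℂ) z).congr_of_eventuallyEq heq).fderiv

lemma diffAt_fPL (hε0 : 0 ≤ ε) {z : ℂ} (hz : z.re ≠ 1/2) :
    DifferentiableAt ℝ (fPL k ε) z := by
  rcases lt_or_gt_of_ne hz with h | h
  · have heq : fPL k ε =ᶠ[nhds z] (fun w => (((k + Real.sqrt ε : ℝ):ℂ)+1)/2 * w +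
        (((k + Real.sqrt ε : ℝ):ℂ)-1)/2 * (starRingEnd ℂ) w + ((0:ℝ):ℂ)) := by
      filter_upwards [isOpen_lt_half.mem_nhds h] with w hw
      exact fPL_eq_left hw.le
    exact ((hasFDerivAt_La (k + Real.sqrt ε) ((0:ℝ):ℂ) z).congr_of_eventuallyEq
      heq).differentiableAt
  · have heq : fPL k ε =ᶠ[nhds z] (fun w => (((k - Real.sqrt ε : ℝ):ℂ)+1)/2 * w +
        (((k - Real.sqrt ε : ℝ):ℂ)-1)/2 * (starRingEnd ℂ) w + ((Real.sqrt ε:ℝ):ℂ)) := by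
      filter_upwards [isOpen_gt_half.mem_nhds h] with w hw
      exact fPL_eq_right hε0 hw.le
    exact ((hasFDerivAt_La (k - Real.sqrt ε) ((Real.sqrt ε:ℝ):ℂ) z).congr_of_eventuallyEq
      heq).differentiableAt

end ke2

-- measure lemmas
lemma volume_re_im_prod (s t : Set ℝ) (hs : MeasurableSet s) (ht : MeasurableSet t) :
    volume {z : ℂ | z.re ∈ s ∧ z.im ∈ t} = volume s * volume t := by
  have : {z : ℂ | z.re ∈ s ∧ z.im ∈ t} = Complex.measurableEquivRealProd ⁻¹' (s ×ˢ t) := by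
    ext z
    simp only [Complex.measurableEquivRealProd, Homeomorph.toMeasurableEquiv_coe,
      Set.mem_preimage, Set.mem_prod, Complex.equivRealProdCLM, Set.mem_setOf_eq]
    rfl
  rw [this, Complex.volume_preserving_equiv_real_prod.measure_preimage
    (hs.prod ht).nullMeasurableSet, MeasureTheory.Measure.volume_eq_prod,
    MeasureTheory.Measure.prod_prod]

lemma volume_line_null : volume {z : ℂ | z.re = 1/2} = 0 := by
  have : {z : ℂ | z.re = 1/2} = {z : ℂ | z.re ∈ ({1/2} : Set ℝ) ∧ z.im ∈ Set.univ} := by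
    ext z; simp
  rw [this, volume_re_im_prod _ _ (measurableSet_singleton _) MeasurableSet.univ]
  simp

lemma ae_ne_line : ∀ᵐ z : ℂ, z.re ≠ 1/2 := by
  rw [MeasureTheory.ae_iff]
  convert volume_line_null using 2
  ext z; simp


section img
variable {k ε : ℝ} (hk : 1 < k) (hε : ε ∈ Set.Ioo (0 : ℝ) ((k - 1) ^ 2))

lemma image_fPL (hk : 1 < k) (hε : ε ∈ Set.Ioo (0 : ℝ) ((k - 1) ^ 2)) :
    fPL k ε '' Qone 1 = Qone k := by
  have hmono := (gPL_strictMono hk hε).monotone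
  apply Set.Subset.antisymm
  · rintro _ ⟨z, hz, rfl⟩
    refine ⟨⟨?_, ?_⟩, hz.2⟩
    · have := hmono hz.1.1
      rwa [gPL_zero] at this
    · have := hmono hz.1.2
      rwa [gPL_one hε.1.le] at this
  · rintro w ⟨⟨hw1, hw2⟩, hw3⟩
    have hIVT : Set.Icc (gPL k ε 0) (gPL k ε 1) ⊆ gPL k ε '' Set.Icc 0 1 :=
      intermediate_value_Icc zero_le_one (gPL_continuous hε.1.le).continuousOn
    obtain ⟨x, hx, hgx⟩ := hIVT (by rw [gPL_zero, gPL_one hε.1.le]; exact ⟨hw1, hw2⟩)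
    refine ⟨⟨x, w.im⟩, ⟨hx, hw3⟩, ?_⟩
    apply Complex.ext
    · exact hgx
    · rfl

lemma interior_Qone (ℓ : ℝ) :
    interior (Qone ℓ) = {z : ℂ | z.re ∈ Set.Ioo 0 ℓ ∧ z.im ∈ Set.Ioo 0 1} := by
  have h : Qone ℓ = Complex.equivRealProdCLM.toHomeomorph ⁻¹'
      (Set.Icc 0 ℓ ×ˢ Set.Icc 0 1) := by
    ext z; rfl
  rw [h, ← Complex.equivRealProdCLM.toHomeomorph.preimage_interior, interior_prod_eq,
    interior_Icc, interior_Icc]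
  rfl

lemma mem_latticeL_iff (hk0 : 0 < k) (v : ℂ) :
    v ∈ latticeL k 1 0 ↔ ∃ m n : ℤ, v.re = n * k ∧ v.im = m := by
  constructor
  · intro hv
    induction hv using AddSubgroup.closure_induction with
    | mem x hx =>
      rcases hx with h | h
      · exact ⟨1, 0, by simp [h], by simp [h]⟩
      · rw [Set.mem_singleton_iff] at h
        subst h
        exact ⟨0, 1, by push_cast; ring, by push_cast; ring⟩
    | zero => exact ⟨0, 0, by simp, by simp⟩
    | add x y hx hy ihx ihy =>
      obtain ⟨m1, n1, e1, e2⟩ := ihx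
      obtain ⟨m2, n2, e3, e4⟩ := ihy
      exact ⟨m1 + m2, n1 + n2, by simp only [Complex.add_re, e1, e3]; push_cast; ring,
        by simp only [Complex.add_im, e2, e4]; push_cast; ring⟩
    | neg x hx ihx =>
      obtain ⟨m1, n1, e1, e2⟩ := ihx
      exact ⟨-m1, -n1, by simp only [Complex.neg_re, e1]; push_cast; ring,
        by simp only [Complex.neg_im, e2]; push_cast; ring⟩
  · rintro ⟨m, n, h1, h2⟩
    have hv : v = n • (⟨k * 1, 0 * 1⟩ : ℂ) + m • Complex.I := by
      apply Complex.ext <;>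
        simp [Complex.add_re, Complex.add_im, h1, h2] <;> ring
    rw [hv]
    exact AddSubgroup.add_mem _
      (AddSubgroup.zsmul_mem _ (AddSubgroup.subset_closure (by simp)) n)
      (AddSubgroup.zsmul_mem _ (AddSubgroup.subset_closure (by simp)) m)

lemma isFundDom_Qone (hk0 : 0 < k) : IsFundDom k 1 0 (Qone k) := by
  constructor
  · apply Set.eq_univ_of_forall
    intro z
    set n : ℤ := ⌊z.re / k⌋
    set m : ℤ := ⌊z.im⌋
    have hv : (⟨(n : ℝ) * k, (m : ℝ)⟩ : ℂ) ∈ latticeL k 1 0 :=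
      (mem_latticeL_iff hk0 _).2 ⟨m, n, rfl, rfl⟩
    rw [Set.mem_iUnion]
    refine ⟨_, Set.mem_iUnion.2 ⟨hv, ?_⟩⟩
    refine ⟨z - ⟨(n : ℝ) * k, (m : ℝ)⟩, ⟨⟨?_, ?_⟩, ⟨?_, ?_⟩⟩, by ring⟩
    · show (0:ℝ) ≤ z.re - (n : ℝ) * k
      have h1 : (n : ℝ) ≤ z.re / k := Int.floor_le _
      have h2 := (le_div_iff₀ hk0).1 h1
      linarith
    · show z.re - (n : ℝ) * k ≤ k
      have h1 : z.re / k < n + 1 := Int.lt_floor_add_one _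
      have h2 := (div_lt_iff₀ hk0).1 h1
      nlinarith
    · show (0:ℝ) ≤ z.im - (m : ℝ)
      linarith [Int.floor_le z.im]
    · show z.im - (m : ℝ) ≤ 1
      linarith [(Int.lt_floor_add_one z.im).le]
  · intro v hv hv0
    obtain ⟨m, n, h1, h2⟩ := (mem_latticeL_iff hk0 v).1 hv
    rw [interior_Qone]
    ext z
    simp only [Set.mem_inter_iff, Set.mem_setOf_eq, Set.mem_image, Set.mem_empty_iff_false,
      iff_false]
    rintro ⟨⟨hz1, hz2⟩, w, ⟨⟨hw1, hw2⟩, rfl⟩⟩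
    have hre : (w + v).re = w.re + n * k := by rw [Complex.add_re, h1]
    have him : (w + v).im = w.im + m := by rw [Complex.add_im, h2]
    rw [hre] at hz1
    rw [him] at hz2
    have hn : n = 0 := by
      have h3 : (-1:ℝ) < n := by
        have hlin : (-1:ℝ) * k < n * k := by linarith [hz1.1, hw1.2]
        exact lt_of_mul_lt_mul_right hlin hk0.le
      have h4 : (n:ℝ) < 1 := by
        have hlin : (n:ℝ) * k < 1 * k := by linarith [hz1.2, hw1.1]
        exact lt_of_mul_lt_mul_right hlin hk0.le
      have h3' : (-1:ℤ) < n := by exact_mod_cast h3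
      have h4' : n < (1:ℤ) := by exact_mod_cast h4
      omega
    have hm : m = 0 := by
      have h3 : (-1:ℝ) < m := by linarith [hz2.1, hw2.2]
      have h4 : (m:ℝ) < 1 := by linarith [hz2.2, hw2.1]
      have h3' : (-1:ℤ) < m := by exact_mod_cast h3
      have h4' : m < (1:ℤ) := by exact_mod_cast h4
      omega
    apply hv0
    apply Complex.ext
    · rw [h1, hn]; simp
    · rw [h2, hm]; simp

end img

section main
variable {k ε : ℝ}

lemma one_lt_kps (hk : 1 < k) (hε : ε ∈ Set.Ioo (0:ℝ) ((k-1)^2)) : 1 < k + Real.sqrt ε := by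
  have := (sqrt_lt hk hε).1; linarith

lemma one_lt_kms (hk : 1 < k) (hε : ε ∈ Set.Ioo (0:ℝ) ((k-1)^2)) : 1 < k - Real.sqrt ε := by
  have := (sqrt_lt hk hε).2; linarith

lemma distK_fPL_left (hk : 1 < k) (hε : ε ∈ Set.Ioo (0:ℝ) ((k-1)^2)) {z : ℂ}
    (hz : z.re < 1/2) : distK (fPL k ε) z = k + Real.sqrt ε :=
  (distK_of_fderiv (one_lt_kps hk hε) (fderiv_fPL_left hz)).1

lemma distK_fPL_right (hk : 1 < k) (hε : ε ∈ Set.Ioo (0:ℝ) ((k-1)^2)) {z : ℂ}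
    (hz : (1:ℝ)/2 < z.re) : distK (fPL k ε) z = k - Real.sqrt ε :=
  (distK_of_fderiv (one_lt_kms hk hε) (fderiv_fPL_right hε.1.le hz)).1

lemma fderiv_fStar (hk : 1 < k) (z : ℂ) : fderiv ℝ (fStar k 0) z = La k := by
  have h : fStar k 0 = fun w => ((k:ℂ)+1)/2 * w + ((k:ℂ)-1)/2 * (starRingEnd ℂ) w
      + ((0:ℝ):ℂ) := by
    funext w
    rw [affine_apply]
    apply Complex.ext <;> simp [fStar]
  rw [h]
  exact (hasFDerivAt_La k ((0:ℝ):ℂ) z).fderiv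

lemma distK_fStar (hk : 1 < k) (z : ℂ) : distK (fStar k 0) z = k :=
  (distK_of_fderiv hk (fderiv_fStar hk z)).1

-- measurable sets
lemma measurableSet_strip (s t : Set ℝ) (hs : MeasurableSet s) (ht : MeasurableSet t) :
    MeasurableSet {z : ℂ | z.re ∈ s ∧ z.im ∈ t} := by
  have : {z : ℂ | z.re ∈ s ∧ z.im ∈ t} =
      Complex.re ⁻¹' s ∩ Complex.im ⁻¹' t := rfl
  rw [this]
  exact (Complex.measurable_re hs).inter (Complex.measurable_im ht)

lemma volume_Qone : volume (Qone 1) = 1 := by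
  have : Qone 1 = {z : ℂ | z.re ∈ Set.Icc (0:ℝ) 1 ∧ z.im ∈ Set.Icc (0:ℝ) 1} := rfl
  rw [this, volume_re_im_prod _ _ measurableSet_Icc measurableSet_Icc]
  simp

lemma integral_distK_fPL (hk : 1 < k) (hε : ε ∈ Set.Ioo (0:ℝ) ((k-1)^2)) :
    (∫ z in Qone 1, distK (fPL k ε) z) = k := by
  set s := Real.sqrt ε with hs
  set A : Set ℂ := {z : ℂ | z.re ∈ Set.Ico (0:ℝ) (1/2) ∧ z.im ∈ Set.Icc (0:ℝ) 1} with hA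
  set B : Set ℂ := {z : ℂ | z.re ∈ Set.Ioc ((1:ℝ)/2) 1 ∧ z.im ∈ Set.Icc (0:ℝ) 1} with hB
  have hAm : MeasurableSet A := measurableSet_strip _ _ measurableSet_Ico measurableSet_Icc
  have hBm : MeasurableSet B := measurableSet_strip _ _ measurableSet_Ioc measurableSet_Icc
  have hvolA : volume A = ENNReal.ofReal (1/2) := by
    rw [hA, volume_re_im_prod _ _ measurableSet_Ico measurableSet_Icc]
    simp [Real.volume_Ico, Real.volume_Icc]
  have hvolB : volume B = ENNReal.ofReal (1/2) := by
    rw [hB, volume_re_im_prod _ _ measurableSet_Ioc measurableSet_Icc]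
    rw [Real.volume_Ioc, Real.volume_Icc]
    norm_num
  have hsub : A ∪ B ⊆ Qone 1 := by
    rintro z (⟨h1, h2⟩ | ⟨h1, h2⟩) <;>
      exact ⟨⟨by linarith [h1.1, h1.2], by linarith [h1.1, h1.2]⟩, h2⟩
  have hdiff : Qone 1 \ (A ∪ B) ⊆ {z : ℂ | z.re = 1/2} := by
    rintro z ⟨⟨⟨h1, h2⟩, h3⟩, h4⟩
    simp only [Set.mem_union, hA, hB, Set.mem_setOf_eq, Set.mem_Ico, Set.mem_Ioc,
      Set.mem_Icc, not_or, not_and] at h4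
    by_contra hne
    rcases lt_or_gt_of_ne hne with h | h
    · exact absurd h3 (by simpa using h4.1 ⟨h1, h⟩)
    · exact absurd h3 (by simpa using h4.2 ⟨h, h2⟩)
  have haeeq : (A ∪ B : Set ℂ) =ᵐ[volume] Qone 1 := by
    rw [MeasureTheory.ae_eq_set]
    constructor
    · rw [Set.diff_eq_empty.2 hsub]; simp
    · exact MeasureTheory.measure_mono_null hdiff volume_line_null
  rw [← MeasureTheory.setIntegral_congr_set haeeq]
  have hdisj : Disjoint A B := by
    rw [Set.disjoint_left]
    rintro z ⟨h1, _⟩ ⟨h2, _⟩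
    exact absurd (h1.2.trans_le h2.1.le) (lt_irrefl _)
  have hIA : IntegrableOn (fun z => distK (fPL k ε) z) A := by
    have hc : IntegrableOn (fun _ : ℂ => k + s) A :=
      MeasureTheory.integrableOn_const (by rw [hvolA]; exact ENNReal.ofReal_ne_top)
    exact hc.congr_fun (fun z hz => (distK_fPL_left hk hε hz.1.2).symm) hAm
  have hIB : IntegrableOn (fun z => distK (fPL k ε) z) B := by
    have hc : IntegrableOn (fun _ : ℂ => k - s) B :=
      MeasureTheory.integrableOn_const (by rw [hvolB]; exact ENNReal.ofReal_ne_top)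
    exact hc.congr_fun (fun z hz => (distK_fPL_right hk hε hz.1.1).symm) hBm
  rw [MeasureTheory.setIntegral_union hdisj hBm hIA hIB]
  have eA : (∫ z in A, distK (fPL k ε) z) = (1/2) * (k + s) := by
    rw [MeasureTheory.setIntegral_congr_fun hAm
      (fun z hz => distK_fPL_left hk hε hz.1.2)]
    rw [MeasureTheory.setIntegral_const, measureReal_def, hvolA, ENNReal.toReal_ofReal (by norm_num)]
    simp [smul_eq_mul, hs]
  have eB : (∫ z in B, distK (fPL k ε) z) = (1/2) * (k - s) := by
    rw [MeasureTheory.setIntegral_congr_fun hBm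
      (fun z hz => distK_fPL_right hk hε hz.1.1)]
    rw [MeasureTheory.setIntegral_const, measureReal_def, hvolB, ENNReal.toReal_ofReal (by norm_num)]
    simp [smul_eq_mul, hs]
  rw [eA, eB]; ring

lemma integral_distK_fStar (hk : 1 < k) :
    (∫ z in Qone 1, distK (fStar k 0) z) = k := by
  have : (∫ z in Qone 1, distK (fStar k 0) z) = ∫ _z in Qone 1, k :=
    MeasureTheory.setIntegral_congr_fun
      (measurableSet_strip _ _ measurableSet_Icc measurableSet_Icc)
      (fun z _ => distK_fStar hk z)
  rw [this, MeasureTheory.setIntegral_const, measureReal_def, volume_Qone]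
  simp

end main

section memf
variable {k ε : ℝ}

lemma memF_fPL (hk : 1 < k) (hε : ε ∈ Set.Ioo (0:ℝ) ((k-1)^2)) :
    memF k 1 0 (fPL k ε) := by
  have hs0 := (sqrt_lt hk hε).1
  have hs1 := (sqrt_lt hk hε).2
  have hae : ∀ᵐ z ∂(volume.restrict (Qone 1)), z.re ≠ 1/2 :=
    MeasureTheory.ae_restrict_of_ae ae_ne_line
  refine ⟨⟨(fPL_continuous hε.1.le).continuousOn,
    (fPL_injective hk hε).injOn, rfl, ?_, ?_, ?_⟩, ?_, ?_, ?_, ?_⟩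
  · filter_upwards [hae] with z hz
    exact diffAt_fPL hε.1.le hz
  · haveI : IsFiniteMeasure (volume.restrict (Qone 1)) := by
      constructor
      rw [MeasureTheory.Measure.restrict_apply_univ, volume_Qone]
      exact ENNReal.one_lt_top
    refine MeasureTheory.MemLp.of_bound
      ((measurable_fderiv ℝ (fPL k ε)).norm.aestronglyMeasurable) (k + Real.sqrt ε) ?_
    filter_upwards [hae] with z hz
    rw [Real.norm_of_nonneg (norm_nonneg _)]
    rcases lt_or_gt_of_ne hz with h | h
    · rw [fderiv_fPL_left h]
      exact La_opNorm_le _ (by linarith)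
    · rw [fderiv_fPL_right hε.1.le h]
      exact (La_opNorm_le _ (by linarith)).trans (by linarith)
  · refine ⟨fun _ => k + Real.sqrt ε, measurable_const, fun _ => by show (1:ℝ) ≤ k + Real.sqrt ε; linarith, ?_⟩
    filter_upwards [hae] with z hz
    rcases lt_or_gt_of_ne hz with h | h
    · obtain ⟨_, hj, he1, he2⟩ := distK_of_fderiv (one_lt_kps hk hε) (fderiv_fPL_left h)
      rw [hj, he1, he2]
      constructor
      · linarith
      · nlinarith
    · obtain ⟨_, hj, he1, he2⟩ :=
        distK_of_fderiv (one_lt_kms hk hε) (fderiv_fPL_right hε.1.le h)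
      rw [hj, he1, he2]
      constructor
      · linarith
      · nlinarith
  · apply Complex.ext
    · show gPL k ε (0:ℂ).re = (0:ℂ).re
      rw [Complex.zero_re, gPL_zero]
    · rfl
  · intro x hx
    apply Complex.ext
    · show gPL k ε ((x:ℂ) + Complex.I).re = (fPL k ε x + Complex.I).re
      simp [fPL]
    · simp [fPL]
  · intro y hy
    simp only [fPL, Complex.ext_iff, Complex.add_re, Complex.add_im, Complex.ofReal_re,
      Complex.ofReal_im, Complex.mul_re, Complex.mul_im, Complex.I_re, Complex.I_im]
    norm_num
    rw [gPL_one hε.1.le, gPL_zero]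
    norm_num
  · rw [image_fPL hk hε]
    exact isFundDom_Qone (by linarith)

end memf

/-- **Non-uniqueness of minimizers for `φ(t)=t`.** For `ℓ=1`, `n=0`, `k>1` and
`0<ε<(k−1)²`, the piecewise-linear maps `f_ε` belong to `𝓕`, are pairwise distinct, have
distortion `k+√ε` on `{0<x<1/2}` and `k−√ε` on `{1/2<x<1}`, and all have the same (linear)
mean distortion `k` as the linear stretch `f*`; hence for `φ(t)=t` the mean distortion
functional has infinitely many minimizers in `𝓕`. -/
theorem non_uniqueness_linear_phi (k : ℝ) (hk : 1 < k) :
    (∀ ε ∈ Set.Ioo (0 : ℝ) ((k - 1) ^ 2), memF k 1 0 (fPL k ε)) ∧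
    (∀ ε ∈ Set.Ioo (0 : ℝ) ((k - 1) ^ 2), ∀ ε' ∈ Set.Ioo (0 : ℝ) ((k - 1) ^ 2),
      ε ≠ ε' → fPL k ε ≠ fPL k ε') ∧
    (∀ ε ∈ Set.Ioo (0 : ℝ) ((k - 1) ^ 2), ∀ z : ℂ,
      z.re ∈ Set.Ioo (0 : ℝ) (1 / 2) → distK (fPL k ε) z = k + Real.sqrt ε) ∧
    (∀ ε ∈ Set.Ioo (0 : ℝ) ((k - 1) ^ 2), ∀ z : ℂ,
      z.re ∈ Set.Ioo (1 / 2 : ℝ) 1 → distK (fPL k ε) z = k - Real.sqrt ε) ∧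
    (∀ ε ∈ Set.Ioo (0 : ℝ) ((k - 1) ^ 2),
      (∫ z in Qone 1, distK (fPL k ε) z) = ∫ z in Qone 1, distK (fStar k 0) z) ∧
    ((∫ z in Qone 1, distK (fStar k 0) z) = k) := by
  refine ⟨fun ε hε => memF_fPL hk hε, ?_, ?_, ?_, ?_, integral_distK_fStar hk⟩
  · intro ε hε ε' hε' hne h
    apply hne
    have := congrArg Complex.re (congrFun h ((1:ℝ)/2 : ℂ))
    have hre : (((1:ℝ)/2 : ℂ)).re = 1/2 := by norm_num
    simp only [fPL] at this
    rw [hre] at this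
    rw [gPL, gPL, if_pos le_rfl, if_pos le_rfl] at this
    have hsq : Real.sqrt ε = Real.sqrt ε' := by
      have h2 : (k + Real.sqrt ε) * (1/2) = (k + Real.sqrt ε') * (1/2) := this
      linarith
    calc ε = Real.sqrt ε ^ 2 := (Real.sq_sqrt hε.1.le).symm
      _ = Real.sqrt ε' ^ 2 := by rw [hsq]
      _ = ε' := Real.sq_sqrt hε'.1.le
  · exact fun ε hε z hz => distK_fPL_left hk hε hz.2
  · exact fun ε hε z hz => distK_fPL_right hk hε hz.1
  · intro ε hε
    rw [integral_distK_fPL hk hε, integral_distK_fStar hk]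
end

section
/- Let Q₁=[0,1]×[0,1], k>1, f*(x+iy)=kx+iy, and for 0<ε<(k−1)² let f_ε(x+iy)=g_ε(x)+iy where g_ε(x)=(k+√ε)x for x∈[0,1/2] and g_ε(x)=(k−√ε)x+√ε for x∈[1/2,1]. Then |f_ε(ξ)−f*(ξ)| ≤ C·√ε for all ξ∈∂Q₁ for a constant C>0, while ∫_{Q₁}|f_ε−f*|(z) dL²(z) ≥ c·√ε for a constant c>0. Hence the exponent 1/2 in the linear-stretch stability estimate is sharp. -/
open MeasureTheory Set

lemma dEq (k ε : ℝ) (z : ℂ) :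
    fPL k ε z - fStar k 0 z = ((gPL k ε z.re - k * z.re : ℝ) : ℂ) := by
  apply Complex.ext <;> simp [fPL, fStar]

lemma diff_abs (k ε : ℝ) (z : ℂ) :
    ‖fPL k ε z - fStar k 0 z‖ = |gPL k ε z.re - k * z.re| := by
  rw [dEq, Complex.norm_real, Real.norm_eq_abs]

lemma gdiff (k ε x : ℝ) : gPL k ε x - k * x =
    if x ≤ 1 / 2 then Real.sqrt ε * x else Real.sqrt ε * (1 - x) := by
  unfold gPL; split <;> ring

-- rectangle preimage volume
lemma vol_rect (a b c d : ℝ) :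
    volume {z : ℂ | z.re ∈ Set.Icc a b ∧ z.im ∈ Set.Icc c d} =
      volume (Set.Icc a b) * volume (Set.Icc c d) := by
  have h := Complex.volume_preserving_equiv_real_prod.measure_preimage
    ((measurableSet_Icc.prod measurableSet_Icc) :
      MeasurableSet (Set.Icc a b ×ˢ Set.Icc c d)).nullMeasurableSet
  have : Complex.measurableEquivRealProd ⁻¹' (Set.Icc a b ×ˢ Set.Icc c d) =
      {z : ℂ | z.re ∈ Set.Icc a b ∧ z.im ∈ Set.Icc c d} := by
    ext z; simp [Complex.measurableEquivRealProd, Set.mem_prod]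
    tauto
  rw [this] at h
  rw [h, Measure.volume_eq_prod, Measure.prod_prod]

lemma meas_rect (a b c d : ℝ) :
    MeasurableSet {z : ℂ | z.re ∈ Set.Icc a b ∧ z.im ∈ Set.Icc c d} := by
  exact (Complex.measurable_re measurableSet_Icc).inter
    (Complex.measurable_im measurableSet_Icc)


/-- **Sharpness of the exponent 1/2 in the linear-stretch stability estimate.** For `k>1`
there exist constants `C, c > 0` such that for all `0<ε<(k−1)²`, the piecewise-linear map
`f_ε` satisfies `|f_ε − f*| ≤ C√ε` pointwise on `∂Q₁` while
`∫_{Q₁} |f_ε − f*| ≥ c√ε`. -/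
theorem linear_stretch_sharpness (k : ℝ) (hk : 1 < k) :
    ∃ C > (0 : ℝ), ∃ c > (0 : ℝ),
      ∀ ε ∈ Set.Ioo (0 : ℝ) ((k - 1) ^ 2),
        (∀ ξ ∈ frontier (Qone 1),
          ‖fPL k ε ξ - fStar k 0 ξ‖ ≤ C * Real.sqrt ε) ∧
        c * Real.sqrt ε ≤ ∫ z in Qone 1, ‖fPL k ε z - fStar k 0 z‖ := by
  refine ⟨1, one_pos, 1/16, by norm_num, ?_⟩
  rintro ε ⟨hε0, hε1⟩
  have hs : 0 ≤ Real.sqrt ε := Real.sqrt_nonneg ε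
  -- pointwise bounds on [0,1]
  have key : ∀ x : ℝ, x ∈ Set.Icc (0:ℝ) 1 →
      0 ≤ gPL k ε x - k * x ∧ gPL k ε x - k * x ≤ Real.sqrt ε * (1/2) := by
    rintro x ⟨h0, h1⟩
    rw [gdiff]
    split_ifs with h
    · exact ⟨mul_nonneg hs h0, by nlinarith⟩
    · push_neg at h
      constructor
      · exact mul_nonneg hs (by linarith)
      · nlinarith
  have habs : ∀ z : ℂ, z ∈ Qone 1 →
      ‖fPL k ε z - fStar k 0 z‖ = gPL k ε z.re - k * z.re := by
    intro z hz
    rw [diff_abs, abs_of_nonneg (key z.re hz.1).1]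
  constructor
  · intro ξ hξ
    have hξQ : ξ ∈ Qone 1 := by
      have : IsClosed (Qone 1) := by
        exact (isClosed_Icc.preimage Complex.continuous_re).inter
          (isClosed_Icc.preimage Complex.continuous_im)
      exact this.closure_eq ▸ (frontier_subset_closure hξ)
    rw [habs ξ hξQ]
    calc gPL k ε ξ.re - k * ξ.re ≤ Real.sqrt ε * (1/2) := (key ξ.re hξQ.1).2
      _ ≤ 1 * Real.sqrt ε := by linarith
  · -- integral lower bound
    set A : Set ℂ := {z : ℂ | z.re ∈ Set.Icc (1/4:ℝ) (1/2) ∧ z.im ∈ Set.Icc (0:ℝ) 1} with hA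
    have hAQ : A ⊆ Qone 1 := by
      rintro z ⟨⟨h1, h2⟩, h3⟩
      exact ⟨⟨by linarith, by linarith⟩, h3⟩
    have hmA : MeasurableSet A := meas_rect _ _ _ _
    have hmQ : MeasurableSet (Qone 1) := meas_rect _ _ _ _
    have hvolA : volume A = ENNReal.ofReal (1/4) := by
      rw [hA, vol_rect, Real.volume_Icc, Real.volume_Icc]
      rw [← ENNReal.ofReal_mul (by norm_num)]
      norm_num
    have hvolQ : volume (Qone 1) = ENNReal.ofReal 1 := by
      have : Qone 1 = {z : ℂ | z.re ∈ Set.Icc (0:ℝ) 1 ∧ z.im ∈ Set.Icc (0:ℝ) 1} := rfl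
      rw [this, vol_rect, Real.volume_Icc]
      norm_num
    -- measurability of integrand
    have hmeas : Measurable fun z : ℂ => ‖fPL k ε z - fStar k 0 z‖ := by
      have : (fun z : ℂ => ‖fPL k ε z - fStar k 0 z‖) =
          fun z : ℂ => |gPL k ε z.re - k * z.re| := by
        funext z; exact diff_abs k ε z
      rw [this]
      have hg : Measurable (gPL k ε) := by
        unfold gPL
        exact Measurable.ite (measurableSet_le measurable_id measurable_const)
          (measurable_const.mul measurable_id)
          ((measurable_const.mul measurable_id).add measurable_const)
      exact ((hg.comp Complex.measurable_re).sub
        (measurable_const.mul Complex.measurable_re)).abs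
    have hint : IntegrableOn (fun z : ℂ => ‖fPL k ε z - fStar k 0 z‖)
        (Qone 1) volume := by
      apply Integrable.mono' (g := fun _ : ℂ => Real.sqrt ε * (1/2))
      · apply (integrableOn_const_iff (C := Real.sqrt ε * (1/2))).mpr
        right; rw [hvolQ]; exact ENNReal.ofReal_lt_top
      · exact (hmeas.aestronglyMeasurable).restrict
      · filter_upwards [ae_restrict_mem hmQ] with z hz
        rw [Real.norm_eq_abs, habs z hz, abs_of_nonneg (key z.re hz.1).1]
        exact (key z.re hz.1).2
    have step1 : (Real.sqrt ε / 4) * (volume A).toReal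
        ≤ ∫ z in A, ‖fPL k ε z - fStar k 0 z‖ := by
      rw [mul_comm]; show volume.real A • (Real.sqrt ε / 4) ≤ _
      apply setIntegral_ge_of_const_le hmA
      · rw [hvolA]; exact ENNReal.ofReal_ne_top
      · intro z hz
        rw [habs z (hAQ hz), gdiff]
        rcases hz with ⟨⟨h1, h2⟩, _⟩
        rw [if_pos h2]
        calc Real.sqrt ε / 4 = Real.sqrt ε * (1/4) := by ring
          _ ≤ Real.sqrt ε * z.re := by
              apply mul_le_mul_of_nonneg_left h1 hs
      · exact hint.mono_set hAQ
    have step2 : ∫ z in A, ‖fPL k ε z - fStar k 0 z‖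
        ≤ ∫ z in Qone 1, ‖fPL k ε z - fStar k 0 z‖ := by
      apply setIntegral_mono_set hint
      · filter_upwards [ae_restrict_mem hmQ] with z hz using (key z.re hz.1).1.trans_eq
          (habs z hz).symm
      · exact HasSubset.Subset.eventuallyLE hAQ
    have hvA : (volume A).toReal = 1/4 := by
      rw [hvolA, ENNReal.toReal_ofReal (by norm_num)]
    calc (1/16) * Real.sqrt ε = (Real.sqrt ε / 4) * (1/4) := by ring
      _ = (Real.sqrt ε / 4) * (volume A).toReal := by rw [hvA]
      _ ≤ _ := step1.trans step2
end

section
/- Let 0<q<1 and k>1, A₁={w∈ℂ: q≤|w|≤1}, A₂={w∈ℂ: q^k≤|w|≤1}, g*(w)=w|w|^{k−1}, and for 0<ε<(k−1)² define g^{(ε)}:A₁→A₂ by g^{(ε)}(w)=q^{√ε}·w·|w|^{k−1−√ε} for |w|∈[q,q^{1/2}] and g^{(ε)}(w)=w·|w|^{k−1+√ε} for |w|∈[q^{1/2},1]. Then g^{(ε)} is a quasiconformal homeomorphism with g^{(ε)}=g* on ∂A₁, K(w,g^{(ε)})=k−√ε for |w|∈[q,q^{1/2}) and K(w,g^{(ε)})=k+√ε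 for |w|∈(q^{1/2},1], the maps g^{(ε)} are pairwise distinct for distinct ε∈(0,(k−1)²), and ∫_{A₁} K(w,g^{(ε)})/|w|² dL²(w) = ∫_{A₁} K(w,g*)/|w|² dL²(w). Hence for φ(t)=t the mean distortion functional on the annuli has infinitely many minimizers. -/
open MeasureTheory Set

/-- The radial stretch map `g*(w) = w |w|^{k-1}`. -/
noncomputable def radialStretch (k : ℝ) (w : ℂ) : ℂ :=
  w * ((‖w‖ ^ (k - 1) : ℝ) : ℂ)

/-- The competitor map `g^{(ε)}` on the annulus: a piecewise radial stretch. -/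
noncomputable def gAnn (q k ε : ℝ) (w : ℂ) : ℂ :=
  if ‖w‖ ≤ q ^ (1 / 2 : ℝ) then
    ((q ^ Real.sqrt ε : ℝ) : ℂ) * w * ((‖w‖ ^ (k - 1 - Real.sqrt ε) : ℝ) : ℂ)
  else w * ((‖w‖ ^ (k - 1 + Real.sqrt ε) : ℝ) : ℂ)

/-! On each of the sub-annuli `q ≤ |w| < √q` and `√q < |w| ≤ 1` the map `g^{(ε)}` is a radial
power `w ↦ c·w·|w|^a`, whose Wirtinger derivatives `c(a+2)/2·|w|^a` and `c·a/2·|w|^(a-2)·w²` give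
it the constant distortion `a + 1`: this is `k - √ε` inside and `k + √ε` outside. On moduli
`g^{(ε)}` acts by a continuous strictly increasing profile sending `q ↦ q^k` and `1 ↦ 1`, so it is
a homeomorphism `A₁ → A₂` agreeing with `g*` on `∂A₁`, and changing `ε` changes its value at `√q`.
In polar coordinates `∫_{A₁} K(|w|)/|w|² = 2π ∫_q^1 K(r)/r dr`; the two sub-annuli have the same
logarithmic modulus `½ log(1/q)`, so the distortions `k ∓ √ε` average out to `k`, the distortion
of `g*`. -/

open Real Filter Topology ComplexConjugate

lemma real_inner_one_right_complex (w : ℂ) : inner ℝ w 1 = w.re := by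
  simp [Complex.inner]

lemma real_inner_I_right_complex (w : ℂ) : inner ℝ w Complex.I = w.im := by
  simp [Complex.inner]

section Wirtinger

variable {f g : ℂ → ℂ} {z : ℂ}

lemma fderiv_apply_eq_wz_mul_add_wzbar_mul_conj (f : ℂ → ℂ) (z h : ℂ) :
    fderiv ℝ f z h = wz f z * h + wzbar f z * conj h := by
  set L := fderiv ℝ f z
  have hL : L h = h.re • L 1 + h.im • L Complex.I := by
    rw [← L.map_smul, ← L.map_smul, ← L.map_add]
    congr 1
    apply Complex.ext <;> simp
  have hconj : conj h = h.re - h.im * Complex.I := by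
    apply Complex.ext <;> simp
  rw [hL, wz, wzbar, hconj, Complex.real_smul, Complex.real_smul]
  linear_combination ((L 1 - Complex.I * L Complex.I) / 2) * Complex.re_add_im h
    + (h.im * L Complex.I) * Complex.I_sq

lemma norm_fderiv_le_norm_wz_add_norm_wzbar (f : ℂ → ℂ) (z : ℂ) :
    ‖fderiv ℝ f z‖ ≤ ‖wz f z‖ + ‖wzbar f z‖ := by
  refine ContinuousLinearMap.opNorm_le_bound _ (by positivity) fun h => ?_
  rw [fderiv_apply_eq_wz_mul_add_wzbar_mul_conj]
  calc ‖wz f z * h + wzbar f z * conj h‖ ≤ ‖wz f z * h‖ + ‖wzbar f z * conj h‖ :=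
        norm_add_le _ _
    _ = (‖wz f z‖ + ‖wzbar f z‖) * ‖h‖ := by
        rw [norm_mul, norm_mul, Complex.norm_conj]; ring

lemma one_le_distK (f : ℂ → ℂ) (z : ℂ) : 1 ≤ distK f z := by
  unfold distK
  split_ifs with h
  · rw [le_div_iff₀ (by linarith)]
    linarith [norm_nonneg (wzbar f z)]
  · exact le_rfl

lemma jacF_nonneg_of_norm_wzbar_lt (h : ‖wzbar f z‖ < ‖wz f z‖) : 0 ≤ jacF f z := by
  rw [jacF, sub_nonneg]
  exact pow_le_pow_left₀ (norm_nonneg _) h.le 2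

lemma sq_norm_wz_add_norm_wzbar_eq_distK_mul_jacF (h : ‖wzbar f z‖ < ‖wz f z‖) :
    (‖wz f z‖ + ‖wzbar f z‖) ^ 2 = distK f z * jacF f z := by
  rw [distK, if_pos h, jacF, div_mul_eq_mul_div, eq_div_iff (by linarith)]
  ring

lemma measurable_distK (f : ℂ → ℂ) : Measurable (distK f) := by
  have h1 := measurable_fderiv_apply_const ℝ f 1
  have hI := measurable_fderiv_apply_const ℝ f Complex.I
  have hz : Measurable fun z => ‖wz f z‖ := ((h1.sub (hI.const_mul _)).div_const 2).norm
  have hzbar : Measurable fun z => ‖wzbar f z‖ := ((h1.add (hI.const_mul _)).div_const 2).norm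
  exact Measurable.ite (measurableSet_lt hzbar hz) ((hz.add hzbar).div (hz.sub hzbar))
    measurable_const

lemma Filter.EventuallyEq.wz_eq (h : f =ᶠ[𝓝 z] g) : wz f z = wz g z := by
  rw [wz, wz, h.fderiv_eq]

lemma Filter.EventuallyEq.wzbar_eq (h : f =ᶠ[𝓝 z] g) : wzbar f z = wzbar g z := by
  rw [wzbar, wzbar, h.fderiv_eq]

lemma Filter.EventuallyEq.distK_eq (h : f =ᶠ[𝓝 z] g) : distK f z = distK g z := by
  rw [distK, distK, h.wz_eq, h.wzbar_eq]

end Wirtinger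

lemma fdHomeoOn_of_ae_norm_wzbar_lt {f : ℂ → ℂ} {A B : Set ℂ} (hcont : ContinuousOn f A)
    (hinj : InjOn f A) (himage : f '' A = B) (hA : volume A ≠ ⊤) (M : ℝ)
    (hae : ∀ᵐ z ∂volume.restrict A, DifferentiableAt ℝ f z ∧ ‖wzbar f z‖ < ‖wz f z‖ ∧
      ‖fderiv ℝ f z‖ ≤ M) :
    FDHomeoOn f A B := by
  have : IsFiniteMeasure (volume.restrict A) := isFiniteMeasure_restrict.mpr hA
  refine ⟨hcont, hinj, himage, hae.mono fun z hz => hz.1, ?_,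
    distK f, measurable_distK f, one_le_distK f, hae.mono fun z hz => ?_⟩
  · refine MemLp.of_bound (measurable_fderiv ℝ f).norm.aestronglyMeasurable M ?_
    filter_upwards [hae] with z hz
    rw [norm_norm]
    exact hz.2.2
  · exact ⟨jacF_nonneg_of_norm_wzbar_lt hz.2.1,
      (sq_norm_wz_add_norm_wzbar_eq_distK_mul_jacF hz.2.1).le⟩

theorem hasFDerivAt_norm_rpow_of_ne_zero {E : Type*} [NormedAddCommGroup E]
    [InnerProductSpace ℝ E] {x : E} (hx : x ≠ 0) (p : ℝ) :
    HasFDerivAt (fun x : E ↦ ‖x‖ ^ p) ((p * ‖x‖ ^ (p - 2)) • innerSL ℝ x) x := by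
  apply HasStrictFDerivAt.hasFDerivAt
  convert! (hasStrictFDerivAt_norm_sq x).rpow_const (p := p / 2) (by simp [hx]) using 0
  simp_rw [← Real.rpow_natCast_mul (norm_nonneg _), ← Nat.cast_smul_eq_nsmul ℝ, smul_smul]
  ring_nf

noncomputable def radialPower (c a : ℝ) (z : ℂ) : ℂ := c * z * (‖z‖ ^ a : ℝ)

lemma hasFDerivAt_radialPower (c a : ℝ) {w : ℂ} (hw : w ≠ 0) :
    HasFDerivAt (radialPower c a)
      (((c * ‖w‖ ^ a : ℝ) : ℂ) • ContinuousLinearMap.id ℝ ℂ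
        + (((c * a * ‖w‖ ^ (a - 2) : ℝ) : ℂ) * w) • (Complex.ofRealCLM.comp (innerSL ℝ w))) w := by
  have hn := Complex.ofRealCLM.hasFDerivAt.comp w (hasFDerivAt_norm_rpow_of_ne_zero hw a)
  refine (((hasFDerivAt_id w).const_mul (c : ℂ)).mul hn).congr_fderiv
    (ContinuousLinearMap.ext fun z => ?_)
  simp only [add_apply, smul_apply,
    ContinuousLinearMap.comp_apply, ContinuousLinearMap.id_apply, Function.comp_apply, id_eq,
    Complex.ofRealCLM_apply, coe_innerSL_apply, smul_eq_mul, Complex.ofReal_mul]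
  ring

lemma fderiv_radialPower_apply (c a : ℝ) {w : ℂ} (hw : w ≠ 0) (h : ℂ) :
    fderiv ℝ (radialPower c a) w h
      = ((c * ‖w‖ ^ a : ℝ) : ℂ) * h + ((c * a * ‖w‖ ^ (a - 2) * inner ℝ w h : ℝ) : ℂ) * w := by
  rw [(hasFDerivAt_radialPower c a hw).fderiv]
  simp only [add_apply, smul_apply,
    ContinuousLinearMap.comp_apply, ContinuousLinearMap.id_apply, Complex.ofRealCLM_apply,
    coe_innerSL_apply, smul_eq_mul, Complex.ofReal_mul]
  ring

lemma wz_radialPower (c a : ℝ) {w : ℂ} (hw : w ≠ 0) :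
    wz (radialPower c a) w = ((c * (a + 2) / 2 * ‖w‖ ^ a : ℝ) : ℂ) := by
  have hw2 : ((‖w‖ ^ (a - 2) : ℝ) : ℂ) * (‖w‖ : ℂ) ^ 2 = ((‖w‖ ^ a : ℝ) : ℂ) := by
    rw [← Complex.ofReal_pow, ← Complex.ofReal_mul, ← Real.rpow_natCast,
      ← Real.rpow_add (norm_pos_iff.mpr hw)]
    norm_num
  have hconj : w * (w.re - Complex.I * w.im) = (‖w‖ : ℂ) ^ 2 := by
    rw [← Complex.ofReal_pow, ← Complex.normSq_eq_norm_sq, ← Complex.mul_conj]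
    congr 1
    apply Complex.ext <;> simp
  rw [wz, fderiv_radialPower_apply c a hw, fderiv_radialPower_apply c a hw,
    real_inner_one_right_complex, real_inner_I_right_complex]
  push_cast
  linear_combination (c * a / 2 * ((‖w‖ ^ (a - 2) : ℝ) : ℂ)) * hconj + (c * a / 2) * hw2
    - (c / 2 * ((‖w‖ ^ a : ℝ) : ℂ)) * Complex.I_sq

lemma wzbar_radialPower (c a : ℝ) {w : ℂ} (hw : w ≠ 0) :
    wzbar (radialPower c a) w = ((c * a / 2 * ‖w‖ ^ (a - 2) : ℝ) : ℂ) * w ^ 2 := by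
  rw [wzbar, fderiv_radialPower_apply c a hw, fderiv_radialPower_apply c a hw,
    real_inner_one_right_complex, real_inner_I_right_complex]
  push_cast
  linear_combination (c * a / 2 * ((‖w‖ ^ (a - 2) : ℝ) : ℂ) * w) * (Complex.re_add_im w)
    + (c / 2 * ((‖w‖ ^ a : ℝ) : ℂ)) * Complex.I_sq

lemma norm_wz_radialPower {c a : ℝ} (hc : 0 ≤ c) (ha : 0 ≤ a) {w : ℂ} (hw : w ≠ 0) :
    ‖wz (radialPower c a) w‖ = c * (a + 2) / 2 * ‖w‖ ^ a := by
  rw [wz_radialPower c a hw, Complex.norm_of_nonneg (by positivity)]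

lemma norm_wzbar_radialPower {c a : ℝ} (hc : 0 ≤ c) (ha : 0 ≤ a) {w : ℂ} (hw : w ≠ 0) :
    ‖wzbar (radialPower c a) w‖ = c * a / 2 * ‖w‖ ^ a := by
  rw [wzbar_radialPower c a hw, norm_mul, Complex.norm_of_nonneg (by positivity), norm_pow,
    mul_assoc, ← Real.rpow_natCast, ← Real.rpow_add (norm_pos_iff.mpr hw)]
  norm_num

lemma norm_wzbar_lt_norm_wz_radialPower {c a : ℝ} (hc : 0 < c) (ha : 0 ≤ a) {w : ℂ}
    (hw : w ≠ 0) : ‖wzbar (radialPower c a) w‖ < ‖wz (radialPower c a) w‖ := by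
  rw [norm_wz_radialPower hc.le ha hw, norm_wzbar_radialPower hc.le ha hw]
  have : 0 < ‖w‖ ^ a := Real.rpow_pos_of_pos (norm_pos_iff.mpr hw) a
  nlinarith

lemma distK_radialPower {c a : ℝ} (hc : 0 < c) (ha : 0 ≤ a) {w : ℂ} (hw : w ≠ 0) :
    distK (radialPower c a) w = a + 1 := by
  have : 0 < ‖w‖ ^ a := Real.rpow_pos_of_pos (norm_pos_iff.mpr hw) a
  rw [distK, if_pos (norm_wzbar_lt_norm_wz_radialPower hc ha hw),
    norm_wz_radialPower hc.le ha hw, norm_wzbar_radialPower hc.le ha hw, div_eq_iff (by nlinarith)]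
  ring

lemma norm_wz_add_norm_wzbar_radialPower {c a : ℝ} (hc : 0 ≤ c) (ha : 0 ≤ a) {w : ℂ}
    (hw : w ≠ 0) :
    ‖wz (radialPower c a) w‖ + ‖wzbar (radialPower c a) w‖ = c * (a + 1) * ‖w‖ ^ a := by
  rw [norm_wz_radialPower hc ha hw, norm_wzbar_radialPower hc ha hw]
  ring

lemma norm_fderiv_radialPower_le {c a : ℝ} (hc : 0 ≤ c) (ha : 0 ≤ a) {w : ℂ} (hw : w ≠ 0) :
    ‖fderiv ℝ (radialPower c a) w‖ ≤ c * (a + 1) * ‖w‖ ^ a :=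
  (norm_wz_add_norm_wzbar_radialPower hc ha hw) ▸ norm_fderiv_le_norm_wz_add_norm_wzbar _ _

lemma annulus_eq_preimage (a : ℝ) : annulus a = (‖·‖) ⁻¹' Icc a 1 := rfl

lemma measurableSet_annulus (a : ℝ) : MeasurableSet (annulus a) :=
  measurableSet_Icc.preimage continuous_norm.measurable

lemma ne_zero_of_mem_annulus {a : ℝ} (ha : 0 < a) {w : ℂ} (hw : w ∈ annulus a) : w ≠ 0 :=
  norm_pos_iff.mp (ha.trans_le hw.1)

lemma volume_annulus_ne_top (a : ℝ) : volume (annulus a) ≠ ⊤ :=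
  ((measure_mono fun w (hw : w ∈ annulus a) => mem_closedBall_zero_iff.mpr hw.2).trans_lt
    measure_closedBall_lt_top).ne

lemma frontier_annulus_subset {a : ℝ} (ha : a ≤ 1) :
    frontier (annulus a) ⊆ (‖·‖) ⁻¹' {a, 1} :=
  frontier_Icc ha ▸ continuous_norm.frontier_preimage_subset (Icc a 1)

lemma ae_norm_ne (s : ℝ) : ∀ᵐ w : ℂ, ‖w‖ ≠ s := by
  filter_upwards [measure_eq_zero_iff_ae_notMem.mp (Measure.addHaar_sphere volume (0 : ℂ) s)]
    with w hw
  rwa [mem_sphere_zero_iff_norm] at hw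

lemma integral_annulus_comp_norm {q : ℝ} (hq : 0 < q) (f : ℝ → ℝ) :
    ∫ w in annulus q, f ‖w‖ = 2 * π * ∫ r in Icc q 1, r * f r := by
  have key := integral_fun_norm_addHaar (volume : Measure ℂ) ((Icc q 1).indicator f)
  rw [← integral_indicator (measurableSet_annulus q)]
  refine (integral_congr_ae (.of_forall fun w => ?_)).trans (key.trans ?_)
  · exact (Set.indicator_comp_right (‖·‖) (s := Icc q 1) (g := f)).symm
  · rw [← integral_indicator measurableSet_Icc, ← integral_indicator measurableSet_Ioi]
    simp only [Complex.finrank_real_complex, Measure.real, Complex.volume_ball,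
      ENNReal.ofReal_one, one_pow, one_mul, ENNReal.coe_toReal, NNReal.coe_real_pi,
      Nat.add_one_sub_one, pow_one, smul_eq_mul, nsmul_eq_mul, Nat.cast_ofNat, mul_assoc]
    congr 3 with r
    by_cases hr : r ∈ Icc q 1
    · simp [hr, hq.trans_le hr.1]
    · simp [hr]

lemma integral_annulus_div_norm_sq {q : ℝ} (hq : 0 < q) (K : ℝ → ℝ) :
    ∫ w in annulus q, K ‖w‖ / ‖w‖ ^ 2 = 2 * π * ∫ r in Icc q 1, K r / r := by
  rw [integral_annulus_comp_norm hq fun r => K r / r ^ 2]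
  congr 2 with r
  rcases eq_or_ne r 0 with rfl | hr
  · simp
  · field_simp

lemma integral_Ioc_const_div {a b : ℝ} (ha : 0 < a) (hab : a ≤ b) (c : ℝ) :
    ∫ r in Ioc a b, c / r = c * log (b / a) := by
  simp_rw [div_eq_mul_inv c]
  rw [← intervalIntegral.integral_of_le hab, intervalIntegral.integral_const_mul,
    integral_inv_of_pos ha (ha.trans_le hab)]

lemma integrableOn_const_div {a b : ℝ} (ha : 0 < a) (c : ℝ) :
    IntegrableOn (fun r => c / r) (Icc a b) :=
  (continuousOn_const.div continuousOn_id fun _ hr => (ha.trans_le hr.1).ne').integrableOn_Icc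

lemma integral_Icc_ite_div {a s b : ℝ} (ha : 0 < a) (has : a ≤ s) (hsb : s ≤ b) (c d : ℝ) :
    ∫ r in Icc a b, (if r ≤ s then c else d) / r = c * log (s / a) + d * log (b / s) := by
  have hin : EqOn (fun r => (if r ≤ s then c else d) / r) (fun r => c / r) (Icc a s) :=
    fun r hr => by simp only [if_pos hr.2]
  have hout : EqOn (fun r => (if r ≤ s then c else d) / r) (fun r => d / r) (Ioc s b) :=
    fun r hr => by simp only [if_neg (not_le.mpr hr.1)]
  rw [← Icc_union_Ioc_eq_Icc has hsb, setIntegral_union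
      (Set.disjoint_left.mpr fun r h1 h2 => not_lt.mpr h1.2 h2.1) measurableSet_Ioc
      ((integrableOn_const_div ha c).congr_fun hin.symm measurableSet_Icc)
      (((integrableOn_const_div (ha.trans_le has) d).mono_set Ioc_subset_Icc_self).congr_fun
        hout.symm measurableSet_Ioc),
    setIntegral_congr_fun measurableSet_Icc hin, setIntegral_congr_fun measurableSet_Ioc hout,
    integral_Icc_eq_integral_Ioc, integral_Ioc_const_div ha has,
    integral_Ioc_const_div (ha.trans_le has) hsb]

noncomputable def radialMap (m : ℝ → ℝ) (w : ℂ) : ℂ := ((m ‖w‖ / ‖w‖ : ℝ) : ℂ) * w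

section RadialMap

variable {m : ℝ → ℝ} {a : ℝ}

lemma norm_radialMap {w : ℂ} (hw : w ≠ 0) (hm : 0 ≤ m ‖w‖) : ‖radialMap m w‖ = m ‖w‖ := by
  rw [radialMap, norm_mul, Complex.norm_of_nonneg (div_nonneg hm (norm_nonneg w)),
    div_mul_cancel₀ _ (norm_ne_zero_iff.mpr hw)]

lemma radialMap_ofReal {r : ℝ} (hr : 0 < r) : radialMap m r = m r := by
  rw [radialMap, Complex.norm_of_nonneg hr.le, ← Complex.ofReal_mul, div_mul_cancel₀ _ hr.ne']

lemma continuousOn_radialMap (ha : 0 < a) (hm : ContinuousOn m (Icc a 1)) :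
    ContinuousOn (radialMap m) (annulus a) := by
  exact ContinuousOn.mul (Complex.continuous_ofReal.comp_continuousOn
    ((hm.comp continuous_norm.continuousOn fun _ hw => hw).div
      continuous_norm.continuousOn fun _ hw => norm_ne_zero_iff.mpr
        (ne_zero_of_mem_annulus ha hw))) continuousOn_id

lemma injOn_radialMap (ha : 0 < a) (hm : StrictMonoOn m (Icc a 1))
    (hpos : ∀ r ∈ Icc a 1, 0 < m r) : InjOn (radialMap m) (annulus a) := by
  intro v hv w hw hvw
  have hv0 := ne_zero_of_mem_annulus ha hv
  have hw0 := ne_zero_of_mem_annulus ha hw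
  have hnorm : ‖v‖ = ‖w‖ := hm.injOn hv hw <| by
    rw [← norm_radialMap hv0 (hpos _ hv).le, ← norm_radialMap hw0 (hpos _ hw).le, hvw]
  rw [radialMap, radialMap, hnorm] at hvw
  refine mul_left_cancel₀ ?_ hvw
  exact Complex.ofReal_ne_zero.mpr (div_pos (hpos _ hw) (norm_pos_iff.mpr hw0)).ne'

lemma radialMap_image_annulus (ha : 0 < a) (ha1 : a ≤ 1) (hm : StrictMonoOn m (Icc a 1))
    (hmc : ContinuousOn m (Icc a 1)) (hma : 0 < m a) (hm1 : m 1 = 1) :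
    radialMap m '' annulus a = annulus (m a) := by
  have hpos : ∀ r ∈ Icc a 1, 0 < m r := fun r hr =>
    hma.trans_le (hm.monotoneOn ⟨le_rfl, ha1⟩ hr hr.1)
  ext v
  constructor
  · rintro ⟨w, hw, rfl⟩
    show m a ≤ ‖radialMap m w‖ ∧ ‖radialMap m w‖ ≤ 1
    rw [norm_radialMap (ne_zero_of_mem_annulus ha hw) (hpos _ hw).le, ← hm1]
    exact ⟨hm.monotoneOn ⟨le_rfl, ha1⟩ hw hw.1, hm.monotoneOn hw ⟨ha1, le_rfl⟩ hw.2⟩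
  · intro hv
    have hv0 : v ≠ 0 := ne_zero_of_mem_annulus hma hv
    obtain ⟨r, hr, hmr⟩ := intermediate_value_Icc ha1 hmc (show ‖v‖ ∈ Icc (m a) (m 1) by
      rw [hm1]; exact hv)
    have hr0 : 0 < r := ha.trans_le hr.1
    have hv' : 0 < ‖v‖ := norm_pos_iff.mpr hv0
    have hnorm : ‖((r / ‖v‖ : ℝ) : ℂ) * v‖ = r := by
      rw [norm_mul, Complex.norm_of_nonneg (by positivity), div_mul_cancel₀ _ hv'.ne']
    refine ⟨((r / ‖v‖ : ℝ) : ℂ) * v, by rw [annulus_eq_preimage, mem_preimage, hnorm]; exact hr, ?_⟩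
    rw [radialMap, hnorm, hmr, ← mul_assoc, ← Complex.ofReal_mul, div_mul_div_cancel₀ hr0.ne',
      div_self hv'.ne', Complex.ofReal_one, one_mul]

end RadialMap

noncomputable def gAnnProfile (q k ε r : ℝ) : ℝ :=
  if r ≤ q ^ (1 / 2 : ℝ) then q ^ √ε * r ^ (k - √ε) else r ^ (k + √ε)

lemma gAnn_eq_radialMap (q k ε : ℝ) : gAnn q k ε = radialMap (gAnnProfile q k ε) := by
  funext w
  rcases eq_or_ne w 0 with rfl | hw
  · simp [gAnn, radialMap]
  have hpow (b : ℝ) : ‖w‖ ^ b / ‖w‖ = ‖w‖ ^ (b - 1) := by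
    rw [Real.rpow_sub_one (norm_ne_zero_iff.mpr hw)]
  rw [gAnn, radialMap, gAnnProfile]
  split_ifs
  · rw [mul_div_assoc, hpow]; push_cast; ring_nf
  · rw [hpow]; ring_nf

lemma radialStretch_eq_radialMap (k : ℝ) : radialStretch k = radialMap (· ^ k) := by
  funext w
  rcases eq_or_ne w 0 with rfl | hw
  · simp [radialStretch, radialMap]
  rw [radialStretch, radialMap, ← Real.rpow_sub_one (norm_ne_zero_iff.mpr hw), mul_comm]

lemma gAnn_eventuallyEq_radialPower_of_lt {q k ε : ℝ} {w : ℂ} (hw : ‖w‖ < q ^ (1 / 2 : ℝ)) :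
    gAnn q k ε =ᶠ[𝓝 w] radialPower (q ^ √ε) (k - 1 - √ε) := by
  filter_upwards [(isOpen_lt continuous_norm continuous_const).mem_nhds hw] with z hz
  rw [gAnn, if_pos (le_of_lt hz), radialPower]

lemma gAnn_eventuallyEq_radialPower_of_gt {q k ε : ℝ} {w : ℂ} (hw : q ^ (1 / 2 : ℝ) < ‖w‖) :
    gAnn q k ε =ᶠ[𝓝 w] radialPower 1 (k - 1 + √ε) := by
  filter_upwards [(isOpen_lt continuous_const continuous_norm).mem_nhds hw] with z hz
  rw [gAnn, if_neg (not_le.mpr hz), radialPower, Complex.ofReal_one, one_mul]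

lemma radialStretch_eq_radialPower (k : ℝ) : radialStretch k = radialPower 1 (k - 1) := by
  funext w
  rw [radialStretch, radialPower, Complex.ofReal_one, one_mul]

section Profile

variable {q k ε : ℝ}

lemma rpow_mul_rpow_half_rpow_sub (hq : 0 < q) (e b : ℝ) :
    q ^ e * (q ^ (1 / 2 : ℝ)) ^ (b - e) = (q ^ (1 / 2 : ℝ)) ^ (b + e) := by
  rw [← Real.rpow_mul hq.le, ← Real.rpow_mul hq.le, ← Real.rpow_add hq]
  ring_nf

lemma continuous_gAnnProfile (hq : 0 < q) (hε : √ε < k) : Continuous (gAnnProfile q k ε) :=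
  Continuous.if_le (continuous_const.mul (Real.continuous_rpow_const (by linarith)))
    (Real.continuous_rpow_const (by linarith [Real.sqrt_nonneg ε])) continuous_id continuous_const
    fun r hr => by rw [hr, rpow_mul_rpow_half_rpow_sub hq]

lemma strictMonoOn_gAnnProfile (hq : 0 < q) (hε : √ε < k) :
    StrictMonoOn (gAnnProfile q k ε) (Ioi 0) := by
  have hs : 0 < q ^ (1 / 2 : ℝ) := by positivity
  have hk : 0 < k + √ε := by linarith [Real.sqrt_nonneg ε]
  intro r hr t ht hrt
  simp only [gAnnProfile]
  split_ifs with hrs hts hts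
  · exact mul_lt_mul_of_pos_left (Real.rpow_lt_rpow hr.le hrt (by linarith)) (by positivity)
  · calc q ^ √ε * r ^ (k - √ε) ≤ q ^ √ε * (q ^ (1 / 2 : ℝ)) ^ (k - √ε) := by
          gcongr
          exact le_of_lt hr
      _ = (q ^ (1 / 2 : ℝ)) ^ (k + √ε) := rpow_mul_rpow_half_rpow_sub hq _ _
      _ < t ^ (k + √ε) := Real.rpow_lt_rpow hs.le (lt_of_not_ge hts) hk
  · exact absurd (hrt.trans_le hts) (not_lt.mpr (le_of_not_ge hrs))
  · exact Real.rpow_lt_rpow hr.le hrt hk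

lemma gAnnProfile_pos (hq : 0 < q) {r : ℝ} (hr : 0 < r) : 0 < gAnnProfile q k ε r := by
  unfold gAnnProfile; split_ifs <;> positivity

lemma gAnnProfile_rpow_half (hq : 0 < q) :
    gAnnProfile q k ε (q ^ (1 / 2 : ℝ)) = (q ^ (1 / 2 : ℝ)) ^ (k + √ε) := by
  rw [gAnnProfile, if_pos le_rfl, rpow_mul_rpow_half_rpow_sub hq]

lemma gAnnProfile_self (hq : 0 < q) (hq1 : q ≤ 1) : gAnnProfile q k ε q = q ^ k := by
  rw [gAnnProfile, if_pos (Real.self_le_rpow_of_le_one hq.le hq1 (by norm_num)),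
    ← Real.rpow_add hq]
  ring_nf

lemma gAnnProfile_one (hq : 0 < q) (hq1 : q < 1) : gAnnProfile q k ε 1 = 1 := by
  rw [gAnnProfile, if_neg (not_le.mpr (Real.rpow_lt_one hq.le hq1 (by norm_num))),
    Real.one_rpow]

end Profile

section Competitor

variable {q k ε : ℝ}

lemma distK_gAnn_of_lt (hq : 0 < q) (hε : √ε ≤ k - 1) {w : ℂ} (hw0 : w ≠ 0)
    (hw : ‖w‖ < q ^ (1 / 2 : ℝ)) : distK (gAnn q k ε) w = k - √ε := by
  rw [(gAnn_eventuallyEq_radialPower_of_lt hw).distK_eq,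
    distK_radialPower (by positivity) (by linarith) hw0]
  ring

lemma distK_gAnn_of_gt (hk : 1 ≤ k) {w : ℂ} (hw0 : w ≠ 0) (hw : q ^ (1 / 2 : ℝ) < ‖w‖) :
    distK (gAnn q k ε) w = k + √ε := by
  rw [(gAnn_eventuallyEq_radialPower_of_gt hw).distK_eq,
    distK_radialPower one_pos (by linarith [Real.sqrt_nonneg ε]) hw0]
  ring

lemma distK_radialStretch (hk : 1 ≤ k) {w : ℂ} (hw0 : w ≠ 0) : distK (radialStretch k) w = k := by
  rw [radialStretch_eq_radialPower, distK_radialPower one_pos (by linarith) hw0]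
  ring

lemma exists_gAnn_eventuallyEq_radialPower (hq : 0 < q) (hq1 : q < 1) (hε : √ε ≤ k - 1)
    {w : ℂ} (hw : ‖w‖ ≠ q ^ (1 / 2 : ℝ)) :
    ∃ c a, 0 < c ∧ c ≤ 1 ∧ 0 ≤ a ∧ a + 1 ≤ k + √ε ∧
      gAnn q k ε =ᶠ[𝓝 w] radialPower c a := by
  have he := Real.sqrt_nonneg ε
  rcases hw.lt_or_gt with hw | hw
  · exact ⟨_, _, by positivity, Real.rpow_le_one hq.le hq1.le he, by linarith, by linarith,
      gAnn_eventuallyEq_radialPower_of_lt hw⟩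
  · exact ⟨_, _, one_pos, le_rfl, by linarith, by linarith,
      gAnn_eventuallyEq_radialPower_of_gt hw⟩

lemma ae_restrict_annulus_gAnn (hq : 0 < q) (hq1 : q < 1) (hε : √ε ≤ k - 1) :
    ∀ᵐ w ∂volume.restrict (annulus q),
      DifferentiableAt ℝ (gAnn q k ε) w ∧
      ‖wzbar (gAnn q k ε) w‖ < ‖wz (gAnn q k ε) w‖ ∧
      ‖fderiv ℝ (gAnn q k ε) w‖ ≤ k + √ε ∧
      distK (gAnn q k ε) w ≤ k + √ε := by
  filter_upwards [ae_restrict_mem (measurableSet_annulus q),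
    ae_restrict_of_ae (ae_norm_ne (q ^ (1 / 2 : ℝ)))] with w hw hws
  have hw0 := ne_zero_of_mem_annulus hq hw
  obtain ⟨c, a, hc0, hc1, ha, hak, hg⟩ := exists_gAnn_eventuallyEq_radialPower hq hq1 hε hws
  refine ⟨((hasFDerivAt_radialPower c a hw0).differentiableAt).congr_of_eventuallyEq hg,
    ?_, ?_, ?_⟩
  · rw [hg.wz_eq, hg.wzbar_eq]
    exact norm_wzbar_lt_norm_wz_radialPower hc0 ha hw0
  · have hwa : ‖w‖ ^ a ≤ 1 := Real.rpow_le_one (norm_nonneg w) hw.2 ha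
    rw [hg.fderiv_eq]
    calc ‖fderiv ℝ (radialPower c a) w‖ ≤ c * (a + 1) * ‖w‖ ^ a :=
          norm_fderiv_radialPower_le hc0.le ha hw0
      _ ≤ 1 * (k + √ε) * 1 := by gcongr; linarith [Real.sqrt_nonneg ε]
      _ = k + √ε := by ring
  · rw [hg.distK_eq, distK_radialPower hc0 ha hw0]
    exact hak

lemma fdHomeoOn_gAnn (hq : 0 < q) (hq1 : q < 1) (hε : √ε ≤ k - 1) :
    FDHomeoOn (gAnn q k ε) (annulus q) (annulus (q ^ k)) := by
  have hεk : √ε < k := by linarith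
  have hsub : Icc q 1 ⊆ Ioi 0 := fun r hr => hq.trans_le hr.1
  have hmono := (strictMonoOn_gAnnProfile hq hεk).mono hsub
  have hcont := (continuous_gAnnProfile hq hεk).continuousOn (s := Icc q 1)
  rw [gAnn_eq_radialMap]
  refine fdHomeoOn_of_ae_norm_wzbar_lt (continuousOn_radialMap hq hcont)
    (injOn_radialMap hq hmono fun r hr => gAnnProfile_pos hq (hsub hr)) ?_
    (volume_annulus_ne_top q) (k + √ε) ?_
  · rw [radialMap_image_annulus hq hq1.le hmono hcont (gAnnProfile_pos hq hq)
      (gAnnProfile_one hq hq1), gAnnProfile_self hq hq1.le]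
  · filter_upwards [ae_restrict_annulus_gAnn hq hq1 hε] with w hw
    rw [← gAnn_eq_radialMap]
    exact ⟨hw.1, hw.2.1, hw.2.2.1⟩

lemma gAnn_eqOn_frontier (hq : 0 < q) (hq1 : q < 1) :
    EqOn (gAnn q k ε) (radialStretch k) (frontier (annulus q)) := by
  intro w hw
  have hprofile : gAnnProfile q k ε ‖w‖ = ‖w‖ ^ k := by
    obtain h | h : ‖w‖ = q ∨ ‖w‖ = 1 := frontier_annulus_subset hq1.le hw
    · rw [h, gAnnProfile_self hq hq1.le]
    · rw [h, gAnnProfile_one hq hq1, Real.one_rpow]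
  rw [gAnn_eq_radialMap, radialStretch_eq_radialMap, radialMap, radialMap, hprofile]

lemma gAnn_ne_of_sqrt_ne (hq : 0 < q) (hq1 : q < 1) {ε' : ℝ} (h : √ε ≠ √ε') :
    gAnn q k ε ≠ gAnn q k ε' := by
  intro hg
  have hs : 0 < q ^ (1 / 2 : ℝ) := by positivity
  have := congrFun hg (q ^ (1 / 2 : ℝ) : ℝ)
  rw [gAnn_eq_radialMap, gAnn_eq_radialMap, radialMap_ofReal hs, radialMap_ofReal hs,
    Complex.ofReal_inj, gAnnProfile_rpow_half hq, gAnnProfile_rpow_half hq,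
    Real.rpow_right_inj hs (Real.rpow_lt_one hq.le hq1 (by norm_num)).ne] at this
  exact h (by linarith)

lemma integral_distK_radialStretch (hq : 0 < q) (hq1 : q ≤ 1) (hk : 1 ≤ k) :
    ∫ w in annulus q, distK (radialStretch k) w / ‖w‖ ^ 2 = 2 * π * (k * log q⁻¹) := by
  rw [setIntegral_congr_fun (measurableSet_annulus q) fun w hw => by
      rw [distK_radialStretch hk (ne_zero_of_mem_annulus hq hw)],
    integral_annulus_div_norm_sq hq (fun _ => k), integral_Icc_eq_integral_Ioc,
    integral_Ioc_const_div hq hq1, one_div]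

lemma integral_distK_gAnn (hq : 0 < q) (hq1 : q < 1) (hε : √ε ≤ k - 1) :
    ∫ w in annulus q, distK (gAnn q k ε) w / ‖w‖ ^ 2 = 2 * π * (k * log q⁻¹) := by
  set s := q ^ (1 / 2 : ℝ)
  have hs : 0 < s := by positivity
  have hK : ∀ᵐ w ∂volume.restrict (annulus q), distK (gAnn q k ε) w / ‖w‖ ^ 2
      = (fun r => if r ≤ s then k - √ε else k + √ε) ‖w‖ / ‖w‖ ^ 2 := by
    filter_upwards [ae_restrict_mem (measurableSet_annulus q),
      ae_restrict_of_ae (ae_norm_ne s)] with w hw hws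
    have hw0 := ne_zero_of_mem_annulus hq hw
    rcases hws.lt_or_gt with h | h
    · rw [distK_gAnn_of_lt hq hε hw0 h, if_pos h.le]
    · rw [distK_gAnn_of_gt (by linarith [Real.sqrt_nonneg ε]) hw0 h, if_neg (not_le.mpr h)]
  rw [integral_congr_ae hK,
    integral_annulus_div_norm_sq hq fun r => if r ≤ s then k - √ε else k + √ε,
    integral_Icc_ite_div hq (Real.self_le_rpow_of_le_one hq.le hq1.le (by norm_num))
      (Real.rpow_le_one hq.le hq1.le (by norm_num)),
    Real.log_div hs.ne' hq.ne', Real.log_div one_ne_zero hs.ne', Real.log_one, Real.log_inv,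
    Real.log_rpow hq]
  ring

end Competitor

/-- **Non-uniqueness of minimizers on annuli for `φ(t)=t`.** For `0<ε<(k−1)²` the maps
`g^{(ε)}` are quasiconformal homeomorphisms from `A₁` onto `A₂` agreeing with the radial
stretch `g*` on `∂A₁`, with distortion `k−√ε` on `{q ≤ |w| < q^{1/2}}` and `k+√ε` on
`{q^{1/2} < |w| ≤ 1}`; they are pairwise distinct, yet all have the same weighted mean
distortion `∫_{A₁} K(w,·)/|w|²` as `g*`. Hence for `φ(t)=t` the mean distortion functional
on the annuli has infinitely many minimizers. -/
theorem annuli_non_uniqueness_linear_phi (q k : ℝ) (hq0 : 0 < q) (hq1 : q < 1) (hk : 1 < k) :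
    (∀ ε ∈ Set.Ioo (0 : ℝ) ((k - 1) ^ 2),
      FDHomeoOn (gAnn q k ε) (annulus q) (annulus (q ^ k)) ∧
      ∃ M : ℝ, ∀ᵐ w ∂(volume.restrict (annulus q)), distK (gAnn q k ε) w ≤ M) ∧
    (∀ ε ∈ Set.Ioo (0 : ℝ) ((k - 1) ^ 2),
      Set.EqOn (gAnn q k ε) (radialStretch k) (frontier (annulus q))) ∧
    (∀ ε ∈ Set.Ioo (0 : ℝ) ((k - 1) ^ 2), ∀ w : ℂ,
      q ≤ ‖w‖ → ‖w‖ < q ^ (1 / 2 : ℝ) →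
      distK (gAnn q k ε) w = k - Real.sqrt ε) ∧
    (∀ ε ∈ Set.Ioo (0 : ℝ) ((k - 1) ^ 2), ∀ w : ℂ,
      q ^ (1 / 2 : ℝ) < ‖w‖ → ‖w‖ ≤ 1 →
      distK (gAnn q k ε) w = k + Real.sqrt ε) ∧
    (∀ ε ∈ Set.Ioo (0 : ℝ) ((k - 1) ^ 2), ∀ ε' ∈ Set.Ioo (0 : ℝ) ((k - 1) ^ 2),
      ε ≠ ε' → gAnn q k ε ≠ gAnn q k ε') ∧
    (∀ ε ∈ Set.Ioo (0 : ℝ) ((k - 1) ^ 2),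
      (∫ w in annulus q, distK (gAnn q k ε) w / ‖w‖ ^ 2)
        = ∫ w in annulus q, distK (radialStretch k) w / ‖w‖ ^ 2) := by
  have hsqrt : ∀ ε ∈ Ioo (0 : ℝ) ((k - 1) ^ 2), √ε ≤ k - 1 := fun ε hε =>
    ((Real.sqrt_lt' (by linarith)).mpr hε.2).le
  have hs : 0 < q ^ (1 / 2 : ℝ) := by positivity
  refine ⟨fun ε hε => ⟨fdHomeoOn_gAnn hq0 hq1 (hsqrt ε hε), k + √ε,
      (ae_restrict_annulus_gAnn hq0 hq1 (hsqrt ε hε)).mono fun w hw => hw.2.2.2⟩,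
    fun ε _ => gAnn_eqOn_frontier hq0 hq1,
    fun ε hε w hw1 hw2 =>
      distK_gAnn_of_lt hq0 (hsqrt ε hε) (norm_pos_iff.mp (hq0.trans_le hw1)) hw2,
    fun ε _ w hw1 _ => distK_gAnn_of_gt hk.le (norm_pos_iff.mp (hs.trans hw1)) hw1,
    fun ε hε ε' hε' hne =>
      gAnn_ne_of_sqrt_ne hq0 hq1 fun h => hne ((Real.sqrt_inj hε.1.le hε'.1.le).mp h),
    fun ε hε => ?_⟩
  rw [integral_distK_gAnn hq0 hq1 (hsqrt ε hε), integral_distK_radialStretch hq0 hq1.le hk.le]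
end

section
/- Let 0<q<1 and k>1, A₁={w∈ℂ: q≤|w|≤1}, A₂={w∈ℂ: q^k≤|w|≤1}, and for 0<ε<(k−1)² let g^{(ε)}(w)=q^{√ε}·w·|w|^{k−1−√ε} for |w|∈[q,q^{1/2}] and g^{(ε)}(w)=w·|w|^{k−1+√ε} for |w|∈[q^{1/2},1]. Then for φ(t)=t², ∫_{A₁} K(w,g^{(ε)})²/|w|² dL²(w) = 2π·log(1/q)·(k²+ε), so that ∫_{A₁} K(w,g^{(ε)})²/|w|² dL² ≤ (1+ε)·∫_{A₁} K(w,g*)²/|w|² dL² where g*(w)=w|w|^{k−1}. -/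
open MeasureTheory Set

/-- Auxiliary model map `z ↦ c z |z|^{α-1}`. -/
noncomputable def model (c α : ℝ) (z : ℂ) : ℂ :=
  (c : ℂ) * z * ((‖z‖ ^ (α - 1) : ℝ) : ℂ)

lemma hasFDerivAt_normSq' (z : ℂ) :
    HasFDerivAt Complex.normSq
      ((2 * z.re) • (Complex.reCLM : ℂ →L[ℝ] ℝ) + (2 * z.im) • (Complex.imCLM : ℂ →L[ℝ] ℝ)) z := by
  have h1 : HasFDerivAt (fun w : ℂ => w.re * w.re + w.im * w.im)
      ((2 * z.re) • (Complex.reCLM : ℂ →L[ℝ] ℝ) + (2 * z.im) • (Complex.imCLM : ℂ →L[ℝ] ℝ)) z := by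
    have hre := Complex.reCLM.hasFDerivAt (x := z)
    have him := Complex.imCLM.hasFDerivAt (x := z)
    have := (hre.mul hre).add (him.mul him)
    refine this.congr_fderiv ?_
    ext v
    simp [two_mul, mul_comm]
    ring
  have : Complex.normSq = fun w : ℂ => w.re * w.re + w.im * w.im := by
    ext w; exact Complex.normSq_apply w
  rw [this]; exact h1

lemma abs_rpow_eq_normSq_rpow (α : ℝ) (z : ℂ) :
    ‖z‖ ^ (α - 1) = Complex.normSq z ^ ((α - 1)/2) := by
  rw [← Complex.sq_norm z]
  rw [← Real.rpow_natCast (‖z‖) 2, ← Real.rpow_mul (norm_nonneg z)]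
  push_cast
  rw [show (2:ℝ) * ((α - 1)/2) = α - 1 by ring]

lemma model_hasFDerivAt (c α : ℝ) (z : ℂ) (hz : z ≠ 0) :
    HasFDerivAt (model c α)
      ((Complex.normSq z ^ ((α-1)/2)) • ((c : ℂ) • (ContinuousLinearMap.id ℝ ℂ))
        + (((((α-1)/2) * Complex.normSq z ^ ((α-1)/2 - 1)) •
        ((2 * z.re) • (Complex.reCLM : ℂ →L[ℝ] ℝ) + (2 * z.im) • (Complex.imCLM : ℂ →L[ℝ] ℝ)))).smulRight ((c:ℂ) * z)) z := by
  have hs : Complex.normSq z ≠ 0 := by simpa [Complex.normSq_eq_zero] using hz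
  have hm : HasFDerivAt (fun w : ℂ => Complex.normSq w ^ ((α-1)/2))
      ((((α-1)/2) * Complex.normSq z ^ ((α-1)/2 - 1)) •
        ((2 * z.re) • (Complex.reCLM : ℂ →L[ℝ] ℝ) + (2 * z.im) • (Complex.imCLM : ℂ →L[ℝ] ℝ))) z :=
    (Real.hasDerivAt_rpow_const (Or.inl hs)).comp_hasFDerivAt z (hasFDerivAt_normSq' z)
  have hC : HasFDerivAt (fun w : ℂ => (c : ℂ) * w) ((c : ℂ) • ContinuousLinearMap.id ℝ ℂ) z := by
    convert ((c:ℂ) • ContinuousLinearMap.id ℝ ℂ).hasFDerivAt using 1; ext w; simp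
  have := hm.smul hC
  have heq : (fun w : ℂ => Complex.normSq w ^ ((α-1)/2) • ((c:ℂ) * w)) = model c α := by
    ext w
    simp [model, abs_rpow_eq_normSq_rpow, Complex.real_smul]
    ring
  rw [← heq]
  exact this

lemma wz_model (c α : ℝ) (z : ℂ) (hz : z ≠ 0) (f : ℂ → ℂ) (hf : f =ᶠ[nhds z] model c α) :
    wz f z = ((c * (Complex.normSq z ^ ((α-1)/2)) * ((α+1)/2) : ℝ) : ℂ) ∧
    wzbar f z = ((c * ((α-1)/2) * Complex.normSq z ^ ((α-1)/2 - 1) : ℝ) : ℂ) * z ^ 2 := by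
  have hD : fderiv ℝ f z = fderiv ℝ (model c α) z := hf.fderiv_eq
  have hM := (model_hasFDerivAt c α z hz).fderiv
  rw [wz, wzbar, hD, hM]
  set s := Complex.normSq z with hs
  set p := (α-1)/2 with hp
  have hI : Complex.I ^ 2 = -1 := Complex.I_sq
  have hzc : z * ((z.re : ℂ) - (z.im : ℂ) * Complex.I) = ((s : ℝ) : ℂ) := by
    rw [hs]; rw [← Complex.mul_conj]
    congr 1
    simp [Complex.ext_iff]
  have hBA : ((s ^ (p - 1) : ℝ) : ℂ) * ((s : ℝ) : ℂ) = ((s ^ p : ℝ) : ℂ) := by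
    have hs0 : (0:ℝ) < s := by rw [hs]; exact Complex.normSq_pos.mpr hz
    rw [← Complex.ofReal_mul]
    congr 1
    rw [← Real.rpow_add_one hs0.ne']
    ring_nf
  have hpC : ((p : ℝ) : ℂ) = ((α : ℂ) - 1) / 2 := by rw [hp]; push_cast; ring
  have hre : ((z.re : ℂ) + (z.im : ℂ) * Complex.I) = z := Complex.re_add_im z
  constructor
  · simp only [ContinuousLinearMap.add_apply, ContinuousLinearMap.smul_apply,
      ContinuousLinearMap.smulRight_apply, ContinuousLinearMap.id_apply,
      ContinuousLinearMap.coe_smul', Pi.smul_apply, Complex.reCLM_apply, Complex.imCLM_apply,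
      Complex.real_smul, smul_eq_mul, Complex.I_re, Complex.I_im, Complex.one_re, Complex.one_im]
    push_cast
    linear_combination (-(((s^p : ℝ):ℂ) * (c:ℂ))/2) * hI + ((p:ℂ)*(c:ℂ)*((s^(p-1):ℝ):ℂ)) * hzc + ((p:ℂ)*(c:ℂ)) * hBA + ((c:ℂ)*((s^p:ℝ):ℂ)) * hpC
  · simp only [ContinuousLinearMap.add_apply, ContinuousLinearMap.smul_apply,
      ContinuousLinearMap.smulRight_apply, ContinuousLinearMap.id_apply,
      ContinuousLinearMap.coe_smul', Pi.smul_apply, Complex.reCLM_apply, Complex.imCLM_apply,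
      Complex.real_smul, smul_eq_mul, Complex.I_re, Complex.I_im, Complex.one_re, Complex.one_im]
    push_cast
    linear_combination ((((s^p : ℝ):ℂ) * (c:ℂ))/2) * hI + ((p:ℂ)*(c:ℂ)*((s^(p-1):ℝ):ℂ)*z) * hre

lemma distK_model (c α : ℝ) (hc : 0 < c) (hα : 1 ≤ α) (z : ℂ) (hz : z ≠ 0)
    (f : ℂ → ℂ) (hf : f =ᶠ[nhds z] model c α) : distK f z = α := by
  obtain ⟨h1, h2⟩ := wz_model c α z hz f hf
  have hs0 : 0 < Complex.normSq z := Complex.normSq_pos.mpr hz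
  set s := Complex.normSq z with hs
  set p := (α-1)/2 with hp
  have hsp : 0 < s ^ p := Real.rpow_pos_of_pos hs0 _
  have hsp1 : 0 < s ^ (p-1) := Real.rpow_pos_of_pos hs0 _
  have hrw : s ^ (p-1) * s = s ^ p := by
    rw [← Real.rpow_add_one hs0.ne']; ring_nf
  have hA : ‖wz f z‖ = c * s^p * ((α+1)/2) := by
    rw [h1, Complex.norm_real, Real.norm_eq_abs, abs_of_pos]
    have : (0:ℝ) < (α+1)/2 := by linarith
    positivity
  have hBB : ‖wzbar f z‖ = c * ((α-1)/2) * s^p := by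
    rw [h2, norm_mul, Complex.norm_real, Real.norm_eq_abs, norm_pow, Complex.sq_norm, ← hs]
    have hp0 : (0:ℝ) ≤ p := by rw [hp]; linarith
    rw [_root_.abs_of_nonneg (by positivity : (0:ℝ) ≤ c * p * s^(p-1)), mul_assoc, hrw, hp]
  have hlt : ‖wzbar f z‖ < ‖wz f z‖ := by
    rw [hA, hBB]; nlinarith [mul_pos hc hsp]
  rw [distK, if_pos hlt, hA, hBB]
  have hne : c * s^p ≠ 0 := by positivity
  rw [show c * s^p * ((α+1)/2) + c*((α-1)/2)*s^p = (c*s^p)*α by ring,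
    show c * s^p * ((α+1)/2) - c*((α-1)/2)*s^p = c*s^p by ring,
    mul_div_cancel_left₀ _ hne]

lemma integral_annulus (q t A B : ℝ) (hq0 : 0 < q) (ht0 : q ≤ t) (ht1 : t ≤ 1) :
    ∫ w in annulus q, (if ‖w‖ ≤ t then A else B) / ‖w‖ ^ 2
      = 2 * Real.pi * (A * Real.log (t/q) + B * Real.log (1/t)) := by
  have ht0' : 0 < t := lt_of_lt_of_le hq0 ht0
  have hmeas : MeasurableSet (annulus q) := by
    have : annulus q = ((fun w : ℂ => ‖w‖) ⁻¹' Icc q 1) := by ext w; simp [annulus, mem_Icc]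
    rw [this]
    exact (continuous_norm.measurable) measurableSet_Icc
  set g : ℝ → ℝ := fun r => Set.indicator (Icc q 1) (fun r => (if r ≤ t then A else B)/r^2) r with hg
  have hind : (Set.indicator (annulus q)
      (fun w => (if ‖w‖ ≤ t then A else B) / ‖w‖ ^ 2)) = fun w => g ‖w‖ := by
    ext w
    rw [hg]
    by_cases h : q ≤ ‖w‖ ∧ ‖w‖ ≤ 1 <;>
      simp [annulus, Set.indicator_apply, mem_Icc, h, Set.mem_setOf_eq]
  have step1 : (∫ w in annulus q, (if ‖w‖ ≤ t then A else B) / ‖w‖ ^ 2)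
      = ∫ w : ℂ, g ‖w‖ := by
    rw [← integral_indicator hmeas, hind]
  rw [step1, integral_fun_norm_addHaar volume g]
  rw [Complex.finrank_real_complex, Measure.real, Complex.volume_ball]
  simp only [smul_eq_mul, nsmul_eq_mul, Nat.cast_ofNat, pow_one]
  have hvol : ((ENNReal.ofReal 1 ^ 2 * (NNReal.pi : ENNReal)).toReal) = Real.pi := by
    simp [ENNReal.toReal_mul]
  rw [hvol]
  have step2 : ∫ y in Ioi (0:ℝ), y ^ (2-1) * g y
      = ∫ y in Ioi (0:ℝ), Set.indicator (Icc q 1) (fun r => (if r ≤ t then A else B)/r) y := by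
    apply setIntegral_congr_fun measurableSet_Ioi
    intro y hy
    simp only [pow_one, hg]
    by_cases hmem : y ∈ Icc q 1
    · rw [Set.indicator_of_mem hmem, Set.indicator_of_mem hmem]
      have hy0 : y ≠ 0 := ne_of_gt hy
      field_simp
      ring
    · rw [Set.indicator_of_notMem hmem, Set.indicator_of_notMem hmem, mul_zero]
  have hIoiIcc : Ioi (0:ℝ) ∩ Icc q 1 = Icc q 1 :=
    Set.inter_eq_right.mpr (fun x hx => lt_of_lt_of_le hq0 hx.1)
  rw [step2, setIntegral_indicator measurableSet_Icc, hIoiIcc]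
  have hIcc : ∫ y in Icc q 1, (if y ≤ t then A else B)/y = ∫ y in q..(1:ℝ), (if y ≤ t then A else B)/y := by
    rw [intervalIntegral.integral_of_le (le_trans ht0 ht1), integral_Icc_eq_integral_Ioc]
  rw [hIcc]
  have hqt : q ≤ t := ht0
  have hto : t ≤ 1 := ht1
  have hposA : ∀ y ∈ uIcc q t, y ≠ 0 := by
    intro y hy
    rw [uIcc_of_le hqt] at hy
    exact ne_of_gt (lt_of_lt_of_le hq0 hy.1)
  have hposB : ∀ y ∈ uIcc t 1, y ≠ 0 := by
    intro y hy
    rw [uIcc_of_le hto] at hy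
    exact ne_of_gt (lt_of_lt_of_le ht0' hy.1)
  have hiA : IntervalIntegrable (fun y => A/y) volume q t :=
    (continuousOn_const.div continuousOn_id hposA).intervalIntegrable
  have hiB : IntervalIntegrable (fun y => B/y) volume t 1 :=
    (continuousOn_const.div continuousOn_id hposB).intervalIntegrable
  have heqA : ∀ y ∈ uIcc q t, (fun y => (if y ≤ t then A else B)/y) y = (fun y => A/y) y := by
    intro y hy
    rw [uIcc_of_le hqt] at hy
    simp [hy.2]
  have heqB : (fun y => (if y ≤ t then A else B)/y) =ᵐ[volume.restrict (uIoc t 1)] (fun y => B/y) := by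
    rw [uIoc_of_le hto]
    refine (ae_restrict_iff' measurableSet_Ioc).mpr (Filter.Eventually.of_forall fun y hy => ?_)
    simp [not_le.mpr hy.1]
  have heqA' : (fun y => (if y ≤ t then A else B)/y) =ᵐ[volume.restrict (uIoc q t)] (fun y => A/y) := by
    rw [uIoc_of_le hqt]
    refine (ae_restrict_iff' measurableSet_Ioc).mpr (Filter.Eventually.of_forall fun y hy => ?_)
    simp [hy.2]
  have h1 : IntervalIntegrable (fun y => (if y ≤ t then A else B)/y) volume q t :=
    hiA.congr_ae heqA'.symm
  have h2 : IntervalIntegrable (fun y => (if y ≤ t then A else B)/y) volume t 1 :=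
    hiB.congr_ae heqB.symm
  rw [← intervalIntegral.integral_add_adjacent_intervals h1 h2]
  have hvA : ∫ y in q..t, (if y ≤ t then A else B)/y = A * Real.log (t/q) := by
    rw [intervalIntegral.integral_congr heqA]
    have : ∀ y : ℝ, A / y = A * (1/y) := fun y => by ring
    simp_rw [this]
    rw [intervalIntegral.integral_const_mul, integral_one_div]
    intro h0
    exact hposA 0 h0 rfl
  have hvB : ∫ y in t..1, (if y ≤ t then A else B)/y = B * Real.log (1/t) := by
    rw [intervalIntegral.integral_congr_ae ((ae_restrict_iff' (by rw [uIoc_of_le hto]; exact measurableSet_Ioc)).mp heqB)]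
    have : ∀ y : ℝ, B / y = B * (1/y) := fun y => by ring
    simp_rw [this]
    rw [intervalIntegral.integral_const_mul, integral_one_div]
    intro h0
    exact hposB 0 h0 rfl
  rw [hvA, hvB]
  ring

/-- **Deficit computation for `φ(t)=t²` on the annuli.** For `0<ε<(k−1)²`,
`∫_{A₁} K(w,g^{(ε)})²/|w|² = 2π log(1/q)(k²+ε)`, and consequently
`∫_{A₁} K(w,g^{(ε)})²/|w|² ≤ (1+ε) ∫_{A₁} K(w,g*)²/|w|²` for the radial stretch
`g*(w)=w|w|^{k−1}`. -/
theorem annuli_deficit_phi_sq (q k : ℝ) (hq0 : 0 < q) (hq1 : q < 1) (hk : 1 < k) :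
    ∀ ε ∈ Set.Ioo (0 : ℝ) ((k - 1) ^ 2),
      (∫ w in annulus q, distK (gAnn q k ε) w ^ 2 / ‖w‖ ^ 2)
          = 2 * Real.pi * Real.log (1 / q) * (k ^ 2 + ε) ∧
      (∫ w in annulus q, distK (gAnn q k ε) w ^ 2 / ‖w‖ ^ 2)
          ≤ (1 + ε) * ∫ w in annulus q, distK (radialStretch k) w ^ 2 / ‖w‖ ^ 2 := by
  intro ε hε
  obtain ⟨hε0, hεlt⟩ := hε
  have hmeas : MeasurableSet (annulus q) := by
    have : annulus q = ((fun w : ℂ => ‖w‖) ⁻¹' Icc q 1) := by ext w; simp [annulus, mem_Icc]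
    rw [this]
    exact (continuous_norm.measurable) measurableSet_Icc
  have hsq : Real.sqrt ε ^ 2 = ε := Real.sq_sqrt hε0.le
  have hs0 : 0 < Real.sqrt ε := Real.sqrt_pos.mpr hε0
  have hslt : Real.sqrt ε < k - 1 := by
    have := Real.sqrt_lt_sqrt hε0.le hεlt
    rwa [Real.sqrt_sq (by linarith)] at this
  have hq12 : (0:ℝ) < q ^ (1/2 : ℝ) := Real.rpow_pos_of_pos hq0 _
  have hle1 : q ≤ q ^ (1/2 : ℝ) := by
    nth_rewrite 1 [show q = q ^ (1:ℝ) by rw [Real.rpow_one]]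
    exact Real.rpow_le_rpow_of_exponent_ge hq0 hq1.le (by norm_num)
  have hle2 : q ^ (1/2 : ℝ) ≤ 1 := Real.rpow_le_one hq0.le hq1.le (by norm_num)
  have hL : Real.log (q ^ (1/2:ℝ)) = (1/2) * Real.log q := Real.log_rpow hq0 _
  have hLq : Real.log q < 0 := Real.log_neg hq0 hq1
  -- radial stretch integral
  have hradial : (∫ w in annulus q, distK (radialStretch k) w ^ 2 / ‖w‖ ^ 2)
      = 2 * Real.pi * Real.log (1/q) * k ^ 2 := by
    have hcongr : ∀ w ∈ annulus q, distK (radialStretch k) w ^ 2 / ‖w‖ ^ 2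
        = (if ‖w‖ ≤ 1 then k^2 else k^2) / ‖w‖ ^ 2 := by
      intro w hw
      have hw0 : w ≠ 0 := by
        intro h
        rw [h] at hw
        simp [annulus] at hw
        linarith
      have : distK (radialStretch k) w = k := by
        apply distK_model 1 k one_pos hk.le w hw0
        exact Filter.Eventually.of_forall fun z => by simp [radialStretch, model]
      rw [this, if_pos hw.2]
    rw [setIntegral_congr_fun hmeas hcongr, integral_annulus q 1 (k^2) (k^2) hq0 hq1.le le_rfl]
    rw [div_one, Real.log_one]
    ring
  -- gAnn integral
  have hgann : (∫ w in annulus q, distK (gAnn q k ε) w ^ 2 / ‖w‖ ^ 2)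
      = 2 * Real.pi * Real.log (1 / q) * (k ^ 2 + ε) := by
    have hsph : volume {w : ℂ | ‖w‖ = q ^ (1/2:ℝ)} = 0 := by
      have : {w : ℂ | ‖w‖ = q ^ (1/2:ℝ)} = Metric.sphere (0:ℂ) (q ^ (1/2:ℝ)) := by
        ext w
        simp [Metric.mem_sphere, Complex.dist_eq]
      rw [this]
      exact MeasureTheory.Measure.addHaar_sphere volume 0 _
    have hae0 : ∀ᵐ w : ℂ ∂volume, ‖w‖ ≠ q ^ (1/2:ℝ) := by
      rw [MeasureTheory.ae_iff]
      convert hsph using 2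
      ext w
      simp
    have hae : ∀ᵐ w ∂(volume.restrict (annulus q)),
        distK (gAnn q k ε) w ^ 2 / ‖w‖ ^ 2
          = (if ‖w‖ ≤ q ^ (1/2:ℝ) then (k - Real.sqrt ε)^2 else (k + Real.sqrt ε)^2)
              / ‖w‖ ^ 2 := by
      filter_upwards [ae_restrict_of_ae hae0, ae_restrict_mem hmeas] with w hne hw
      have hw0 : w ≠ 0 := by
        intro h
        rw [h] at hw
        simp [annulus] at hw
        linarith
      by_cases habs : ‖w‖ < q ^ (1/2:ℝ)
      · have hev : gAnn q k ε =ᶠ[nhds w] model (q ^ Real.sqrt ε) (k - Real.sqrt ε) := by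
          have hopen : IsOpen {z : ℂ | ‖z‖ < q ^ (1/2:ℝ)} :=
            isOpen_lt continuous_norm continuous_const
          filter_upwards [hopen.mem_nhds habs] with z hz
          rw [gAnn, if_pos (le_of_lt hz), model,
            show k - Real.sqrt ε - 1 = k - 1 - Real.sqrt ε by ring]
        have hd : distK (gAnn q k ε) w = k - Real.sqrt ε :=
          distK_model _ _ (Real.rpow_pos_of_pos hq0 _) (by linarith) w hw0 _ hev
        rw [hd, if_pos (le_of_lt habs)]
      · have hgt : q ^ (1/2:ℝ) < ‖w‖ := lt_of_le_of_ne (not_lt.mp habs) (Ne.symm hne)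
        have hev : gAnn q k ε =ᶠ[nhds w] model 1 (k + Real.sqrt ε) := by
          have hopen : IsOpen {z : ℂ | q ^ (1/2:ℝ) < ‖z‖} :=
            isOpen_lt continuous_const continuous_norm
          filter_upwards [hopen.mem_nhds hgt] with z hz
          rw [gAnn, if_neg (not_le.mpr hz), model,
            show k + Real.sqrt ε - 1 = k - 1 + Real.sqrt ε by ring]
          simp
        have hd : distK (gAnn q k ε) w = k + Real.sqrt ε :=
          distK_model _ _ one_pos (by linarith) w hw0 _ hev
        rw [hd, if_neg (not_le.mpr hgt)]
    rw [MeasureTheory.integral_congr_ae hae,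
      integral_annulus q (q ^ (1/2:ℝ)) _ _ hq0 hle1 hle2]
    rw [Real.log_div (ne_of_gt hq12) hq0.ne',
      show (1:ℝ)/q^(1/2:ℝ) = (q^(1/2:ℝ))⁻¹ from one_div _, Real.log_inv, hL,
      show (1:ℝ)/q = q⁻¹ from one_div q, Real.log_inv]
    linear_combination (-2 * Real.pi * Real.log q) * hsq
  refine ⟨hgann, ?_⟩
  rw [hgann, hradial]
  have hlog : 0 < Real.log (1/q) := by
    rw [one_div, Real.log_inv]
    linarith
  have hkey : k ^ 2 + ε ≤ (1 + ε) * k ^ 2 := by nlinarith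
  calc 2 * Real.pi * Real.log (1/q) * (k ^ 2 + ε)
      ≤ 2 * Real.pi * Real.log (1/q) * ((1 + ε) * k ^ 2) := by
        apply mul_le_mul_of_nonneg_left hkey
        positivity
    _ = (1 + ε) * (2 * Real.pi * Real.log (1/q) * k ^ 2) := by ring
end

section
/- Let 0<q<1 and k>1, A₁={w∈ℂ: q≤|w|≤1}, g*(w)=w|w|^{k−1}, and for 0<ε<(k−1)² let g^{(ε)}(w)=q^{√ε}·w·|w|^{k−1−√ε} for |w|∈[q,q^{1/2}] and g^{(ε)}(w)=w·|w|^{k−1+√ε} for |w|∈[q^{1/2},1]. Then there is a constant c>0 depending on q and k such that ∫_{A₁} |g^{(ε)}−g*|(w) dL²(w) ≥ c·√ε. In particular, combined with the deficit bound for φ(t)=t², the exponent 1/2 in the spiral-stretch stability theorem is sharp. -/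
open MeasureTheory Set

set_option maxHeartbeats 1000000 in
/-- **Sharpness of the exponent 1/2 in the spiral-stretch stability theorem.** There is a
constant `c>0` depending on `q` and `k` such that for all `0<ε<(k−1)²`, the competitor
`g^{(ε)}` satisfies `∫_{A₁} |g^{(ε)} − g*| ≥ c √ε`, where `g*(w)=w|w|^{k−1}`. -/
theorem annuli_L1_lower_bound (q k : ℝ) (hq0 : 0 < q) (hq1 : q < 1) (hk : 1 < k) :
    ∃ c > (0 : ℝ),
      ∀ ε ∈ Set.Ioo (0 : ℝ) ((k - 1) ^ 2),
        c * Real.sqrt ε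
          ≤ ∫ w in annulus q, ‖gAnn q k ε w - radialStretch k w‖ := by
  -- setup
  have habsM : Measurable fun w : ℂ => ‖w‖ := continuous_norm.measurable
  set r0 : ℝ := q ^ (1 / 2 : ℝ) with hr0def
  have hr0q : q < r0 := by
    have h := Real.rpow_lt_rpow_of_exponent_gt hq0 hq1 (by norm_num : (1:ℝ)/2 < 1)
    rw [Real.rpow_one] at h
    rw [hr0def]
    exact h
  have hr01 : r0 < 1 := Real.rpow_lt_one hq0.le hq1 (by norm_num)
  set a : ℝ := (r0 + 1) / 2 with hadef
  set b : ℝ := (a + 1) / 2 with hbdef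
  have h0r0 : 0 < r0 := Real.rpow_pos_of_pos hq0 _
  have hr0a : r0 < a := by simp only [hadef]; linarith
  have hab : a < b := by simp only [hbdef]; linarith
  have hb1 : b < 1 := by simp only [hbdef]; linarith
  have ha0 : 0 < a := by linarith
  have hb0 : 0 < b := by linarith
  set S : Set ℂ := {w : ℂ | a ≤ ‖w‖ ∧ ‖w‖ ≤ b} with hSdef
  have hSmeas : MeasurableSet S := by
    have : S = {w : ℂ | a ≤ ‖w‖} ∩ {w : ℂ | ‖w‖ ≤ b} := by
      ext w; simp [hSdef, Set.mem_setOf_eq, Set.mem_inter_iff]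
    rw [this]
    exact (measurableSet_le measurable_const habsM).inter
      (measurableSet_le habsM measurable_const)
  have hAmeas : MeasurableSet (annulus q) := by
    have : annulus q = {w : ℂ | q ≤ ‖w‖} ∩ {w : ℂ | ‖w‖ ≤ 1} := by
      ext w; simp [annulus, Set.mem_setOf_eq, Set.mem_inter_iff]
    rw [this]
    exact (measurableSet_le measurable_const habsM).inter
      (measurableSet_le habsM measurable_const)
  have hSsub : S ⊆ annulus q := by
    intro w hw
    exact ⟨le_trans (le_of_lt (lt_trans hr0q hr0a)) hw.1, le_trans hw.2 hb1.le⟩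
  -- S has positive finite measure
  have hSfin : volume S < ⊤ := by
    refine lt_of_le_of_lt (measure_mono ?_) (measure_closedBall_lt_top (x := (0:ℂ)) (r := b))
    intro w hw
    simpa [Metric.mem_closedBall, Complex.dist_eq] using hw.2
  have hSpos : 0 < volume S := by
    refine lt_of_lt_of_le (Metric.measure_ball_pos volume (((a+b)/2 : ℝ) : ℂ)
      (by linarith : (0:ℝ) < (b - a)/2)) (measure_mono ?_)
    intro w hw
    simp only [Metric.mem_ball, Complex.dist_eq] at hw
    have h1 : ‖(((a+b)/2 : ℝ) : ℂ)‖ = (a+b)/2 := by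
      rw [Complex.norm_real, Real.norm_eq_abs, abs_of_nonneg (by linarith)]
    have h2 : |‖w‖ - ‖(((a+b)/2 : ℝ) : ℂ)‖| ≤
        ‖w - (((a+b)/2 : ℝ) : ℂ)‖ := abs_norm_sub_norm_le _ _
    rw [h1] at h2
    obtain ⟨h3, h4⟩ := abs_le.mp (le_trans h2 hw.le)
    exact ⟨by linarith, by linarith⟩
  have hStoReal : 0 < (volume S).toReal := ENNReal.toReal_pos hSpos.ne' hSfin.ne
  -- the constant
  set c1 : ℝ := a * (a ^ (k - 1 : ℝ) * ((-Real.log b) * b ^ (k - 1 : ℝ))) with hc1def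
  have hlogb : Real.log b < 0 := Real.log_neg hb0 hb1
  have hc1pos : 0 < c1 := by
    have h1 : (0:ℝ) < a ^ (k - 1 : ℝ) := Real.rpow_pos_of_pos ha0 _
    have h2 : (0:ℝ) < b ^ (k - 1 : ℝ) := Real.rpow_pos_of_pos hb0 _
    have h3 : (0:ℝ) < -Real.log b := by linarith
    positivity
  refine ⟨c1 * (volume S).toReal, by positivity, ?_⟩
  rintro ε ⟨hε0, hε2⟩
  set s : ℝ := Real.sqrt ε with hsdef
  have hs0 : 0 < s := Real.sqrt_pos.mpr hε0
  have hsk : s < k - 1 := (Real.sqrt_lt' (by linarith)).mpr hε2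
  -- pointwise formula and lower bound on S
  have hpt : ∀ w ∈ S, c1 * s ≤ ‖gAnn q k ε w - radialStretch k w‖ := by
    intro w hw
    obtain ⟨hwa, hwb⟩ := hw
    set r : ℝ := ‖w‖ with hrdef
    have hr0 : 0 < r := lt_of_lt_of_le (by linarith) hwa
    have hnotle : ¬ r ≤ r0 := not_le.mpr (lt_of_lt_of_le hr0a hwa)
    have hg : gAnn q k ε w = w * ((r ^ (k - 1 + s) : ℝ) : ℂ) := by
      rw [gAnn, if_neg (by simpa [hrdef, hr0def] using hnotle)]
    have hdiff : gAnn q k ε w - radialStretch k w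
        = w * (((r ^ (k - 1 + s) : ℝ) : ℂ) - ((r ^ (k - 1) : ℝ) : ℂ)) := by
      rw [hg, radialStretch, mul_sub]
    have hrle : r ^ (k - 1 + s) ≤ r ^ (k - 1) := by
      apply Real.rpow_le_rpow_of_exponent_ge hr0 (le_trans hwb hb1.le)
      linarith
    have habsval : ‖gAnn q k ε w - radialStretch k w‖
        = r * (r ^ (k - 1) - r ^ (k - 1 + s)) := by
      rw [hdiff, norm_mul, ← Complex.ofReal_sub, Complex.norm_real, Real.norm_eq_abs,
        abs_of_nonpos (by linarith), ← hrdef]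
      ring
    rw [habsval]
    have hsplit : r ^ (k - 1 + s) = r ^ (k - 1) * r ^ s := Real.rpow_add hr0 _ _
    rw [hsplit]
    -- key: 1 - r^s ≥ (-log b) * b^(k-1) * s
    have hrs_le : r ^ s ≤ b ^ s := Real.rpow_le_rpow hr0.le hwb hs0.le
    have hbs_exp : b ^ s = Real.exp (Real.log b * s) := Real.rpow_def_of_pos hb0 _
    set t : ℝ := (-Real.log b) * s with htdef
    have ht0 : 0 ≤ t := by
      have : 0 ≤ -Real.log b := by linarith
      positivity
    have hexp1 : Real.exp t * Real.exp (-t) = 1 := by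
      rw [← Real.exp_add]; simp
    have hexp2 : t + 1 ≤ Real.exp t := Real.add_one_le_exp t
    have hexpneg : Real.exp (-t) = b ^ s := by
      rw [hbs_exp]; congr 1; rw [htdef]; ring
    have hbk_le_bs : b ^ (k - 1 : ℝ) ≤ b ^ s :=
      Real.rpow_le_rpow_of_exponent_ge hb0 hb1.le hsk.le
    have hkey : t * b ^ (k - 1 : ℝ) ≤ 1 - b ^ s := by
      have h1 : t * Real.exp (-t) ≤ 1 - Real.exp (-t) := by nlinarith [Real.exp_pos (-t)]
      rw [hexpneg] at h1
      nlinarith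
    have hone : (-Real.log b) * b ^ (k - 1 : ℝ) * s ≤ 1 - r ^ s := by
      have : t * b ^ (k - 1 : ℝ) = (-Real.log b) * b ^ (k - 1 : ℝ) * s := by ring
      linarith [hrs_le]
    have hrk : a ^ (k - 1 : ℝ) ≤ r ^ (k - 1 : ℝ) :=
      Real.rpow_le_rpow ha0.le hwa (by linarith)
    have hgoal : c1 * s = a * (a ^ (k - 1 : ℝ) * ((-Real.log b) * b ^ (k - 1 : ℝ) * s)) := by
      rw [hc1def]; ring
    rw [hgoal]
    have hfac : r * (r ^ (k - 1) - r ^ (k - 1) * r ^ s) = r * (r ^ (k-1) * (1 - r ^ s)) := by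
      ring
    rw [hfac]
    have hak : (0:ℝ) < a ^ (k - 1 : ℝ) := Real.rpow_pos_of_pos ha0 _
    have hbk : (0:ℝ) < b ^ (k - 1 : ℝ) := Real.rpow_pos_of_pos hb0 _
    have hrhs0 : 0 ≤ (-Real.log b) * b ^ (k - 1 : ℝ) * s := by
      have : 0 ≤ -Real.log b := by linarith
      positivity
    have hrk0 : (0:ℝ) < r ^ (k - 1 : ℝ) := Real.rpow_pos_of_pos hr0 _
    nlinarith [mul_le_mul hrk hone hrhs0 hrk0.le]
  have hsk' : Real.sqrt ε < k - 1 := by rw [← hsdef]; exact hsk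
  have hs0' : (0:ℝ) ≤ Real.sqrt ε := Real.sqrt_nonneg ε
  -- measurability / integrability
  have hmf : Measurable fun w => ‖gAnn q k ε w - radialStretch k w‖ := by
    apply habsM.comp
    apply Measurable.sub
    · unfold gAnn
      apply Measurable.ite (measurableSet_le habsM measurable_const)
      · exact ((measurable_const.mul measurable_id).mul
          (Complex.measurable_ofReal.comp (habsM.pow_const _)))
      · exact (measurable_id.mul
          (Complex.measurable_ofReal.comp (habsM.pow_const _)))
    · unfold radialStretch
      exact (measurable_id.mul (Complex.measurable_ofReal.comp (habsM.pow_const _)))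
  have hAfin : volume (annulus q) < ⊤ := by
    refine lt_of_le_of_lt (measure_mono ?_) (measure_closedBall_lt_top (x := (0:ℂ)) (r := 1))
    intro w hw
    simpa [Metric.mem_closedBall, Complex.dist_eq] using hw.2
  have hbound : ∀ w ∈ annulus q,
      ‖gAnn q k ε w - radialStretch k w‖ ≤ 2 := by
    intro w hw
    obtain ⟨hwq, hw1⟩ := hw
    have hr0' : 0 < ‖w‖ := lt_of_lt_of_le hq0 hwq
    have hb1' : ∀ p : ℝ, 0 ≤ p → ‖w‖ ^ p ≤ 1 := fun p hp =>
      Real.rpow_le_one hr0'.le hw1 hp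
    have hgle : ‖gAnn q k ε w‖ ≤ 1 := by
      rw [gAnn]
      split_ifs with h
      · rw [norm_mul, norm_mul, Complex.norm_real, Real.norm_eq_abs, Complex.norm_real, Real.norm_eq_abs,
          abs_of_nonneg (Real.rpow_pos_of_pos hq0 _).le,
          abs_of_nonneg (Real.rpow_pos_of_pos hr0' _).le]
        have h1 : q ^ Real.sqrt ε ≤ 1 := Real.rpow_le_one hq0.le hq1.le hs0'
        have h2 : ‖w‖ ^ (k - 1 - Real.sqrt ε) ≤ 1 := hb1' _ (by linarith)
        have h3 : (0:ℝ) ≤ q ^ Real.sqrt ε := (Real.rpow_pos_of_pos hq0 _).le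
        have h4 : (0:ℝ) ≤ ‖w‖ ^ (k - 1 - Real.sqrt ε) :=
          (Real.rpow_pos_of_pos hr0' _).le
        nlinarith [mul_le_mul h1 hw1 hr0'.le zero_le_one,
          mul_nonneg h3 hr0'.le]
      · rw [norm_mul, Complex.norm_real, Real.norm_eq_abs, abs_of_nonneg (Real.rpow_pos_of_pos hr0' _).le]
        have h2 : ‖w‖ ^ (k - 1 + Real.sqrt ε) ≤ 1 := hb1' _ (by linarith)
        have h4 : (0:ℝ) ≤ ‖w‖ ^ (k - 1 + Real.sqrt ε) :=
          (Real.rpow_pos_of_pos hr0' _).le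
        nlinarith
    have hrle : ‖radialStretch k w‖ ≤ 1 := by
      rw [radialStretch, norm_mul, Complex.norm_real, Real.norm_eq_abs,
        abs_of_nonneg (Real.rpow_pos_of_pos hr0' _).le]
      have h2 : ‖w‖ ^ (k - 1) ≤ 1 := hb1' _ (by linarith)
      nlinarith
    calc ‖gAnn q k ε w - radialStretch k w‖
        ≤ ‖gAnn q k ε w‖ + ‖radialStretch k w‖ :=
          norm_sub_le _ _
      _ ≤ 2 := by linarith
  have hint : IntegrableOn (fun w => ‖gAnn q k ε w - radialStretch k w‖)
      (annulus q) := by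
    apply Integrable.mono' (g := fun _ => (2:ℝ))
      (integrableOn_const hAfin.ne)
      hmf.aestronglyMeasurable
    rw [ae_restrict_iff' hAmeas]
    filter_upwards with w hw
    rw [Real.norm_eq_abs, abs_of_nonneg (norm_nonneg _)]
    exact hbound w hw
  -- assemble
  have hstep1 : (c1 * s) * (volume S).toReal
      ≤ ∫ w in S, ‖gAnn q k ε w - radialStretch k w‖ :=
    by have := setIntegral_ge_of_const_le hSmeas hSfin.ne hpt (hint.mono_set hSsub)
       rw [smul_eq_mul, measureReal_def] at this; linarith
  have hstep2 : (∫ w in S, ‖gAnn q k ε w - radialStretch k w‖)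
      ≤ ∫ w in annulus q, ‖gAnn q k ε w - radialStretch k w‖ := by
    apply setIntegral_mono_set hint
    · filter_upwards with w using norm_nonneg _
    · exact HasSubset.Subset.eventuallyLE hSsub
  calc c1 * (volume S).toReal * s = (c1 * s) * (volume S).toReal := by ring
    _ ≤ _ := le_trans hstep1 hstep2
end
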